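/- arXiv:1903.09817 — 6 statements merged into one kernel-verified Lean document; each statement's English description precedes it below -/
import Mathlib

section
/- Let μ = Σ_{k=1}^∞ 2^{-k} δ_k on ℕ (with ℕ starting at 1), and let γ = Σ_{k=1}^∞ 4^{-k} (δ_{(2k-1,2k-1,2k)} + δ_{(2k-1,2k,2k-1)} + δ_{(2k,2k-1,2k-1)}) on ℕ³. Then γ is a probability measure on ℕ³ and each of the three marginals (pushforwards under the coordinate projections) of γ equals μ. -/
open MeasureTheory
open scoped ENNReal

noncomputable def muCex : Measure ℕ :=
  Measure.sum (fun k : ℕ => ((2 : ℝ≥0∞)⁻¹ ^ (k + 1)) • Measure.dirac (k + 1))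

noncomputable def gammaCex : Measure (ℕ × ℕ × ℕ) :=
  Measure.sum (fun k : ℕ => ((4 : ℝ≥0∞)⁻¹ ^ (k + 1)) •
    (Measure.dirac (2*k+1, 2*k+1, 2*k+2) + Measure.dirac (2*k+1, 2*k+2, 2*k+1)
      + Measure.dirac (2*k+2, 2*k+1, 2*k+1)))

lemma coeff1 (k : ℕ) : (2 : ℝ≥0∞)⁻¹ ^ (2*k+1) = 2 * (4 : ℝ≥0∞)⁻¹ ^ (k+1) := by
  have h4 : (4 : ℝ≥0∞)⁻¹ = (2:ℝ≥0∞)⁻¹ * (2:ℝ≥0∞)⁻¹ := by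
    rw [← ENNReal.mul_inv (by norm_num) (by norm_num)]; norm_num
  rw [h4]
  rw [show (2:ℝ≥0∞) * ((2:ℝ≥0∞)⁻¹ * (2:ℝ≥0∞)⁻¹)^(k+1) = (2 * 2⁻¹) * (2⁻¹ * ((2:ℝ≥0∞)⁻¹*2⁻¹)^k) by ring]
  rw [ENNReal.mul_inv_cancel (by norm_num) (by norm_num), one_mul, mul_pow, pow_succ]
  ring

lemma coeff2 (k : ℕ) : (2 : ℝ≥0∞)⁻¹ ^ (2*k+2) = (4 : ℝ≥0∞)⁻¹ ^ (k+1) := by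
  have h4 : (4 : ℝ≥0∞)⁻¹ = (2:ℝ≥0∞)⁻¹ * (2:ℝ≥0∞)⁻¹ := by
    rw [← ENNReal.mul_inv (by norm_num) (by norm_num)]; norm_num
  rw [h4, mul_pow, show 2*k+2 = (k+1)+(k+1) by ring, pow_add]

lemma marg (f : ℕ × ℕ × ℕ → ℕ) (hodd : ∀ k, f (2*k+1, 2*k+1, 2*k+2) = 2*k+1 ∧
    f (2*k+1, 2*k+2, 2*k+1) = 2*k+1 ∧ f (2*k+2, 2*k+1, 2*k+1) = 2*k+2 ∨
    f (2*k+1, 2*k+1, 2*k+2) = 2*k+1 ∧ f (2*k+1, 2*k+2, 2*k+1) = 2*k+2 ∧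
      f (2*k+2, 2*k+1, 2*k+1) = 2*k+1 ∨
    f (2*k+1, 2*k+1, 2*k+2) = 2*k+2 ∧ f (2*k+1, 2*k+2, 2*k+1) = 2*k+1 ∧
      f (2*k+2, 2*k+1, 2*k+1) = 2*k+1) (hf : Measurable f) :
    Measure.map f gammaCex = muCex := by
  rw [gammaCex, Measure.map_sum hf.aemeasurable]
  ext s hs
  rw [Measure.sum_apply _ hs, muCex, Measure.sum_apply _ hs,
    ← tsum_even_add_odd (f := fun k => ((2:ℝ≥0∞)⁻¹ ^ (k+1) • Measure.dirac (k+1)) s)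
      ENNReal.summable ENNReal.summable, ← ENNReal.tsum_add]
  congr 1
  funext k
  rw [Measure.map_smul, Measure.map_add _ _ hf, Measure.map_add _ _ hf,
    Measure.map_dirac' hf, Measure.map_dirac' hf, Measure.map_dirac' hf]
  simp only [Measure.smul_apply, Measure.add_apply, Measure.dirac_apply' _ hs, smul_eq_mul]
  have h1 := coeff1 k
  have h2 := coeff2 k
  rcases hodd k with ⟨a,b,c⟩|⟨a,b,c⟩|⟨a,b,c⟩ <;>
    rw [a, b, c] <;>
    · rw [show 2*k+1+1 = 2*k+2 by ring, show 2*k+1 = 2*k+1 from rfl] at *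
      rw [h1, h2]; ring

theorem stmt0 :
    IsProbabilityMeasure gammaCex ∧
    Measure.map (fun p : ℕ × ℕ × ℕ => p.1) gammaCex = muCex ∧
    Measure.map (fun p : ℕ × ℕ × ℕ => p.2.1) gammaCex = muCex ∧
    Measure.map (fun p : ℕ × ℕ × ℕ => p.2.2) gammaCex = muCex := by
  refine ⟨?_, marg _ (fun k => Or.inl ⟨rfl, rfl, rfl⟩) measurable_fst,
    marg _ (fun k => Or.inr (Or.inl ⟨rfl, rfl, rfl⟩)) measurable_snd.fst,
    marg _ (fun k => Or.inr (Or.inr ⟨rfl, rfl, rfl⟩)) measurable_snd.snd⟩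
  constructor
  rw [gammaCex, Measure.sum_apply _ MeasurableSet.univ]
  simp only [Measure.smul_apply, Measure.add_apply, Measure.dirac_apply' _ MeasurableSet.univ,
    Set.indicator_univ, Pi.one_apply, smul_eq_mul]
  have : ∀ k : ℕ, (4:ℝ≥0∞)⁻¹ ^ (k+1) * (1 + 1 + 1) = 3 * 4⁻¹ * (4⁻¹:ℝ≥0∞) ^ k := by
    intro k; rw [pow_succ]; ring
  rw [tsum_congr this, ENNReal.tsum_mul_left, ENNReal.tsum_geometric]
  have h34 : (1:ℝ≥0∞) - 4⁻¹ = 3/4 := by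
    rw [ENNReal.sub_eq_of_eq_add (by norm_num)]
    rw [div_eq_mul_inv, show (3:ℝ≥0∞)*4⁻¹+4⁻¹ = (3+1)*4⁻¹ by ring,
      show (3:ℝ≥0∞)+1 = 4 by norm_num, ENNReal.mul_inv_cancel (by norm_num) (by norm_num)]
  rw [h34]
  rw [ENNReal.inv_div (by norm_num) (by norm_num)]
  rw [ENNReal.div_eq_inv_mul]
  rw [show (3:ℝ≥0∞) * 4⁻¹ * (3⁻¹ * 4) = (3 * 3⁻¹) * (4⁻¹ * 4) by ring,
    ENNReal.mul_inv_cancel (by norm_num) (by norm_num),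
    ENNReal.inv_mul_cancel (by norm_num) (by norm_num), one_mul]
end

section
/- Let M ≥ 1 and let (a_k)_{k=1}^M, (b_k)_{k=1}^M, ā be nonnegative reals and (α_k)_{k=1}^M nonnegative reals with Σ α_k = 1, satisfying: 2α_1 = 3ā + 2a_1; 2α_k = 2a_k + b_{k-1} for 2 ≤ k ≤ M; α_k = a_k + 2b_k for 1 ≤ k ≤ M; and b_k = 0 for k > M (interpreting b as extended by zero). Then b_k = 0 for all k, a_k = α_k for all k, and ā = 0. -/
/-! Subtracting twice the second marginal equation at index `k + 1` from the first gives
`b k = 4 * b (k + 1)` for every `k ≥ 1`. Iterating, `b k = 4 ^ n * b (k + n)`, and since `b`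
vanishes beyond `M` all of `b` vanishes; the remaining equations then read `a k = α k` and
`3 * abar = 0`. -/

section RatioRecursion

variable {R : Type*} {f : ℕ → R} {c : R} {m : ℕ}

theorem eq_pow_mul_add_of_eq_mul_succ [Monoid R] (h : ∀ k, m ≤ k → f k = c * f (k + 1)) :
    ∀ n k, m ≤ k → f k = c ^ n * f (k + n) := by
  intro n
  induction n with
  | zero => simp
  | succ n ih =>
    intro k hk
    rw [ih k hk, h (k + n) (by omega), ← mul_assoc, ← pow_succ, add_assoc]

theorem eq_zero_of_eq_mul_succ_of_eventually_zero [MonoidWithZero R] {N : ℕ}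
    (h : ∀ k, m ≤ k → f k = c * f (k + 1)) (hz : ∀ k, N < k → f k = 0) :
    ∀ k, m ≤ k → f k = 0 := by
  intro k hk
  rw [eq_pow_mul_add_of_eq_mul_succ h (N + 1) k hk, hz _ (by omega), mul_zero]

end RatioRecursion

theorem stmt4_general (M : ℕ) (a b α : ℕ → ℝ) (abar : ℝ)
    (hext : ∀ k, M < k → a k = 0 ∧ α k = 0 ∧ b k = 0)
    (heq1 : 2 * α 1 = 3 * abar + 2 * a 1)
    (heqk : ∀ k, 2 ≤ k → 2 * α k = 2 * a k + b (k - 1))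
    (heqk' : ∀ k, 1 ≤ k → α k = a k + 2 * b k) :
    (∀ k, 1 ≤ k → b k = 0) ∧ (∀ k, 1 ≤ k → a k = α k) ∧ abar = 0 := by
  have hrec : ∀ k, 1 ≤ k → b k = 4 * b (k + 1) := by
    intro k hk
    have h₁ := heqk (k + 1) (by omega)
    rw [Nat.add_sub_cancel] at h₁
    linarith [heqk' (k + 1) (by omega)]
  have hb : ∀ k, 1 ≤ k → b k = 0 :=
    eq_zero_of_eq_mul_succ_of_eventually_zero hrec fun k hk => (hext k hk).2.2
  refine ⟨hb, fun k hk => ?_, ?_⟩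
  · linarith [heqk' k hk, hb k hk]
  · linarith [heqk' 1 le_rfl, hb 1 le_rfl]

theorem stmt4 (M : ℕ) (hM : 1 ≤ M) (a b α : ℕ → ℝ) (abar : ℝ)
    (ha : ∀ k, 1 ≤ k → 0 ≤ a k)
    (hb : ∀ k, 1 ≤ k → 0 ≤ b k)
    (habar : 0 ≤ abar)
    (hα : ∀ k, 1 ≤ k → 0 ≤ α k)
    (hαsum : ∑ k ∈ Finset.Icc 1 M, α k = 1)
    (hext : ∀ k, M < k → a k = 0 ∧ α k = 0 ∧ b k = 0)
    (heq1 : 2 * α 1 = 3 * abar + 2 * a 1)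
    (heqk : ∀ k, 2 ≤ k → 2 * α k = 2 * a k + b (k - 1))
    (heqk' : ∀ k, 1 ≤ k → α k = a k + 2 * b k) :
    (∀ k, 1 ≤ k → b k = 0) ∧ (∀ k, 1 ≤ k → a k = α k) ∧ abar = 0 :=
  stmt4_general M a b α abar hext heq1 heqk heqk'
end

section
/- Let X be a finite set, N ≥ 2, c : X^N → ℝ a cost, and γ a probability measure on X^N that is c-cyclically monotone. Then γ is optimal: for every probability measure γ' on X^N with the same N marginals as γ, ∫ c dγ ≤ ∫ c dγ'. -/
/-!
The marginal constraints make `w = γ' - γ` a real solution of a homogeneous linear system with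
rational coefficients, nonnegative off the support `S` of `γ`. Such a solution is a limit of
rational solutions with the same sign pattern, and clearing denominators gives integer solutions
`z = z⁺ - z⁻` with `z⁻` supported in `S`. Listing the points of `z⁻` and of `z⁺` with
multiplicity, equal marginals give in each coordinate a permutation matching the two lists, so
cyclical monotonicity yields `∑ z⁻ c ≤ ∑ z⁺ c`; in the limit, `∫ c dγ ≤ ∫ c dγ'`.
-/

open Finset Filter Topology Matrix MeasureTheory

theorem Matrix.exists_seq_rat_tendsto_of_mulVec_eq_zero {m n : Type*} [Fintype n]
    (M : Matrix m n ℚ) {x : n → ℝ} (hx : M.map (↑) *ᵥ x = 0) :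
    ∃ u : ℕ → n → ℚ, (∀ k, M *ᵥ u k = 0) ∧ (∀ k j, x j = 0 → u k j = 0) ∧
      Tendsto (fun k j => (u k j : ℝ)) atTop (𝓝 x) := by
  classical
  -- Expanding the `x j` in a `ℚ`-basis `b` of `ℝ` writes `x = ∑ t, b t • q t` with rational
  -- solutions `q t`; then approximate the coefficients `b t` by rationals.
  let b := Module.Basis.ofVectorSpace ℚ ℝ
  let q : _ → n → ℚ := fun t j => b.repr (x j) t
  have hq : ∀ t, M *ᵥ q t = 0 := by
    intro t
    ext k
    have := congrArg (fun y => b.repr y t) (congrFun hx k)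
    simpa [mulVec, dotProduct, q, map_sum, ← Rat.smul_def] using this
  let T := univ.biUnion fun j => (b.repr (x j)).support
  have hxq : x = ∑ t ∈ T, b t • fun j => (q t j : ℝ) := by
    ext j
    have hsub : (b.repr (x j)).support ⊆ T :=
      subset_biUnion_of_mem (fun j => (b.repr (x j)).support) (mem_univ j)
    conv_lhs => rw [← b.linearCombination_repr (x j), Finsupp.linearCombination_apply,
      Finsupp.sum_of_support_subset _ hsub _ (by simp)]
    simp [q, Rat.smul_def, mul_comm]
  choose r _ _ hr using fun t => Real.exists_seq_rat_strictMono_tendsto (b t)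
  refine ⟨fun k => ∑ t ∈ T, r t k • q t, fun k => ?_, fun k j hj => ?_, ?_⟩
  · simp [mulVec_sum, mulVec_smul, hq]
  · simp [q, hj]
  · rw [hxq]
    have : (fun k j => ((∑ t ∈ T, r t k • q t) j : ℝ)) =
        fun k => ∑ t ∈ T, (r t k : ℝ) • fun j => (q t j : ℝ) := by
      ext k j
      simp
    rw [this]
    exact tendsto_finsetSum _ fun t _ => (hr t).smul_const _

section Listing

variable {α : Type*} [Fintype α]

noncomputable def sigmaFinEquivFin (A : α → ℕ) {ℓ : ℕ} (h : ∑ a, A a = ℓ) :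
    ((a : α) × Fin (A a)) ≃ Fin ℓ :=
  Fintype.equivFinOfCardEq (by simpa [Fintype.card_sigma] using h)

noncomputable def listWithMult (A : α → ℕ) {ℓ : ℕ} (h : ∑ a, A a = ℓ) (j : Fin ℓ) :
    α :=
  ((sigmaFinEquivFin A h).symm j).1

theorem ne_zero_listWithMult (A : α → ℕ) {ℓ : ℕ} (h : ∑ a, A a = ℓ) (j : Fin ℓ) :
    A (listWithMult A h j) ≠ 0 :=
  (Fin.pos_iff_nonempty.2 ⟨((sigmaFinEquivFin A h).symm j).2⟩).ne'

theorem sum_comp_listWithMult {M : Type*} [AddCommMonoid M] (A : α → ℕ) {ℓ : ℕ}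
    (h : ∑ a, A a = ℓ) (f : α → M) :
    ∑ j, f (listWithMult A h j) = ∑ a, A a • f a := by
  unfold listWithMult
  rw [Equiv.sum_comp (sigmaFinEquivFin A h).symm (fun s : (a : α) × Fin (A a) => f s.1),
    ← univ_sigma_univ, sum_sigma]
  simp

theorem card_filter_listWithMult (A : α → ℕ) {ℓ : ℕ} (h : ∑ a, A a = ℓ)
    (P : α → Prop) [DecidablePred P] : #{j | P (listWithMult A h j)} = ∑ a with P a, A a := by
  rw [card_filter, sum_comp_listWithMult A h (fun a => if P a then 1 else 0), sum_filter]
  simp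

end Listing

theorem exists_perm_comp_eq_of_card_fiber_eq {ℓ : ℕ} {Y : Type*} [DecidableEq Y]
    (f g : Fin ℓ → Y) (h : ∀ v, #{j | f j = v} = #{j | g j = v}) :
    ∃ σ : Equiv.Perm (Fin ℓ), ∀ j, f (σ j) = g j := by
  have e : ∀ v, {j // g j = v} ≃ {j // f j = v} := fun v =>
    Fintype.equivOfCardEq (by rw [Fintype.card_subtype, Fintype.card_subtype, h v])
  exact ⟨Equiv.ofFiberEquiv e, fun j => Equiv.ofFiberEquiv_map e j⟩

theorem exists_pos_nat_mul_eq_intCast {α : Type*} [Fintype α] (q : α → ℚ) :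
    ∃ d : ℕ, 0 < d ∧ ∃ z : α → ℤ, ∀ a, (z a : ℚ) = d * q a := by
  refine ⟨∏ a, (q a).den, prod_pos fun a _ => (q a).den_pos, ?_⟩
  choose e he using fun a => dvd_prod_of_mem (fun a => (q a).den) (mem_univ a)
  refine ⟨fun a => e a * (q a).num, fun a => ?_⟩
  rw [he a]
  push_cast
  rw [← Rat.den_mul_eq_num]
  ring

def marginalMatrix (R : Type*) [Zero R] [One R] (ι X : Type*) [DecidableEq X] :
    Matrix (ι × X) (ι → X) R :=
  Matrix.of fun iv p => if p iv.1 = iv.2 then 1 else 0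

theorem map_marginalMatrix {ι X R : Type*} [DecidableEq X] [DivisionRing R] :
    (marginalMatrix ℚ ι X).map ((↑) : ℚ → R) = marginalMatrix R ι X := by
  ext iv p
  simp [marginalMatrix, apply_ite ((↑) : ℚ → R)]

section CyclicalMonotonicity

variable {ι X : Type*}

def CyclicallyMonotoneOn (c : (ι → X) → ℝ) (S : Set (ι → X)) : Prop :=
  ∀ (ℓ : ℕ) (σ : ι → Equiv.Perm (Fin ℓ)) (x : Fin ℓ → ι → X),
    (∀ j, x j ∈ S) → ∑ j, c (x j) ≤ ∑ j, c (fun i => x (σ i j) i)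

variable [Fintype ι] [DecidableEq ι] [Fintype X] [DecidableEq X]

def marginal {R : Type*} [AddCommMonoid R] (w : (ι → X) → R) (i : ι) (v : X) : R :=
  ∑ p with p i = v, w p

theorem sum_eq_sum_marginal {R : Type*} [AddCommMonoid R] (w : (ι → X) → R) (i : ι) :
    ∑ p, w p = ∑ v, marginal w i v :=
  (sum_fiberwise _ _ _).symm

theorem marginalMatrix_mulVec_eq_zero_iff {R : Type*} [NonAssocSemiring R]
    (w : (ι → X) → R) : marginalMatrix R ι X *ᵥ w = 0 ↔ marginal w = 0 := by
  simp only [funext_iff, Prod.forall, Pi.zero_apply]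
  simp [marginalMatrix, mulVec, dotProduct, marginal, sum_filter]

variable [Nonempty ι] {c : (ι → X) → ℝ} {S : Set (ι → X)}

theorem CyclicallyMonotoneOn.sum_nat_mul_le (hc : CyclicallyMonotoneOn c S)
    {A B : (ι → X) → ℕ} (hA : ∀ p, A p ≠ 0 → p ∈ S) (hAB : marginal A = marginal B) :
    ∑ p, (A p : ℝ) * c p ≤ ∑ p, (B p : ℝ) * c p := by
  obtain ⟨i₀⟩ := ‹Nonempty ι›
  have hmass : ∑ p, B p = ∑ p, A p := by
    rw [sum_eq_sum_marginal A i₀, sum_eq_sum_marginal B i₀, hAB]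
  let xs := listWithMult A rfl
  let ys := listWithMult B hmass
  have hfiber : ∀ i v, #{j | xs j i = v} = #{j | ys j i = v} := by
    intro i v
    exact (card_filter_listWithMult A rfl (· i = v)).trans <|
      (congrFun (congrFun hAB i) v).trans (card_filter_listWithMult B hmass (· i = v)).symm
  choose σ hσ using fun i => exists_perm_comp_eq_of_card_fiber_eq _ _ (hfiber i)
  calc ∑ p, (A p : ℝ) * c p = ∑ j, c (xs j) := by
        simp [xs, sum_comp_listWithMult]
    _ ≤ ∑ j, c (fun i => xs (σ i j) i) :=
        hc _ σ xs fun j => hA _ (ne_zero_listWithMult A rfl j)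
    _ = ∑ j, c (ys j) := by simp only [hσ]
    _ = ∑ p, (B p : ℝ) * c p := by simp [ys, sum_comp_listWithMult]

theorem CyclicallyMonotoneOn.sum_int_mul_nonneg (hc : CyclicallyMonotoneOn c S)
    {z : (ι → X) → ℤ} (hz : marginal z = 0) (hS : ∀ p ∉ S, 0 ≤ z p) :
    0 ≤ ∑ p, (z p : ℝ) * c p := by
  have hsplit : ∀ p, ((z p).toNat : ℤ) - ((-z p).toNat : ℤ) = z p :=
    fun p => Int.toNat_sub_toNat_neg (z p)
  have hmarg : marginal (fun p => (-z p).toNat) = marginal (fun p => (z p).toNat) := by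
    ext i v
    have h : ∑ p with p i = v, (((z p).toNat : ℤ) - (-z p).toNat) = 0 := by
      simpa only [hsplit, marginal, Pi.zero_apply] using congrFun (congrFun hz i) v
    rw [sum_sub_distrib, sub_eq_zero] at h
    exact_mod_cast h.symm
  have hA : ∀ p, (-z p).toNat ≠ 0 → p ∈ S := by
    intro p hp
    by_contra hpS
    exact hp (Int.toNat_eq_zero.2 (by linarith [hS p hpS]))
  have key := hc.sum_nat_mul_le hA hmarg
  have hsplitℝ : ∀ p, (z p : ℝ) = ((z p).toNat : ℝ) - ((-z p).toNat : ℝ) :=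
    fun p => by exact_mod_cast (hsplit p).symm
  simp only [hsplitℝ, sub_mul, sum_sub_distrib]
  linarith

theorem CyclicallyMonotoneOn.sum_rat_mul_nonneg (hc : CyclicallyMonotoneOn c S)
    {q : (ι → X) → ℚ} (hq : marginal q = 0) (hS : ∀ p ∉ S, 0 ≤ q p) :
    0 ≤ ∑ p, (q p : ℝ) * c p := by
  obtain ⟨d, hd, z, hz⟩ := exists_pos_nat_mul_eq_intCast q
  have hzmarg : marginal z = 0 := by
    ext i v
    have h := congrFun (congrFun hq i) v
    simp only [marginal, Pi.zero_apply] at h ⊢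
    exact_mod_cast (show ((∑ p with p i = v, z p : ℤ) : ℚ) = 0 by
      push_cast [hz]
      rw [← mul_sum, h, mul_zero])
  have hzS : ∀ p ∉ S, 0 ≤ z p := fun p hp => by
    have h : (0 : ℚ) ≤ z p := hz p ▸ mul_nonneg (Nat.cast_nonneg d) (hS p hp)
    exact_mod_cast h
  have key := hc.sum_int_mul_nonneg hzmarg hzS
  have hzℝ : ∀ p, (z p : ℝ) = d * (q p : ℝ) := fun p => by exact_mod_cast hz p
  simp only [hzℝ, mul_assoc, ← mul_sum] at key
  exact nonneg_of_mul_nonneg_right key (by exact_mod_cast hd)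

theorem CyclicallyMonotoneOn.sum_mul_nonneg (hc : CyclicallyMonotoneOn c S)
    {w : (ι → X) → ℝ} (hw : marginal w = 0) (hS : ∀ p ∉ S, 0 ≤ w p) :
    0 ≤ ∑ p, w p * c p := by
  have hw' : (marginalMatrix ℚ ι X).map (↑) *ᵥ w = 0 := by
    rw [map_marginalMatrix, marginalMatrix_mulVec_eq_zero_iff, hw]
  obtain ⟨u, hu, hu0, hlim⟩ := exists_seq_rat_tendsto_of_mulVec_eq_zero _ hw'
  have hlim' : ∀ p, Tendsto (fun k => (u k p : ℝ)) atTop (𝓝 (w p)) := tendsto_pi_nhds.1 hlim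
  have hsign : ∀ p, ∀ᶠ k in atTop, p ∉ S → 0 ≤ u k p := by
    intro p
    by_cases hp : p ∈ S
    · exact Eventually.of_forall fun _ h => absurd hp h
    rcases (hS p hp).eq_or_lt with h | h
    · exact Eventually.of_forall fun k _ => (hu0 k p h.symm).ge
    · filter_upwards [(hlim' p).eventually (lt_mem_nhds h)] with k hk _
      exact_mod_cast hk.le
  have hev : ∀ᶠ k in atTop, 0 ≤ ∑ p, (u k p : ℝ) * c p := by
    filter_upwards [eventually_all.2 hsign] with k hk
    exact hc.sum_rat_mul_nonneg ((marginalMatrix_mulVec_eq_zero_iff _).1 (hu k)) hk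
  exact ge_of_tendsto (tendsto_finsetSum _ fun p _ => (hlim' p).mul_const (c p)) hev

end CyclicalMonotonicity

theorem marginal_measureReal_singleton {ι X : Type*} [Fintype ι] [DecidableEq ι] [Fintype X]
    [DecidableEq X] [MeasurableSpace X] [MeasurableSingletonClass X] (μ : Measure (ι → X))
    [IsFiniteMeasure μ] (i : ι) (v : X) :
    marginal (fun p => μ.real {p}) i v = (μ.map (· i)).real {v} := by
  rw [map_measureReal_apply (measurable_pi_apply i) (measurableSet_singleton v), marginal,
    sum_measureReal_singleton]
  congr 1
  ext p
  simp

theorem stmt7 (X : Type*) [Fintype X] [MeasurableSpace X] [MeasurableSingletonClass X]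
    (N : ℕ) (hN : 2 ≤ N) (c : (Fin N → X) → ℝ)
    (γ : Measure (Fin N → X)) [IsProbabilityMeasure γ]
    (hmono : ∀ (ℓ : ℕ) (σ : Fin N → Equiv.Perm (Fin ℓ)) (x : Fin ℓ → Fin N → X),
      (∀ j, γ {x j} ≠ 0) →
      ∑ j, c (x j) ≤ ∑ j, c (fun i => x (σ i j) i)) :
    ∀ γ' : Measure (Fin N → X), IsProbabilityMeasure γ' →
      (∀ i : Fin N, Measure.map (fun p => p i) γ' = Measure.map (fun p => p i) γ) →
      ∫ x, c x ∂γ ≤ ∫ x, c x ∂γ' := by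
  classical
  intro γ' _ hmarg
  have : Nonempty (Fin N) := ⟨⟨0, by omega⟩⟩
  have hw : marginal (fun p => γ'.real {p} - γ.real {p}) = 0 := by
    ext i v
    have h := marginal_measureReal_singleton γ' i v
    rw [hmarg i, ← marginal_measureReal_singleton γ i v] at h
    simp only [marginal, sum_sub_distrib, Pi.zero_apply] at h ⊢
    rw [h, sub_self]
  have hS : ∀ p ∉ {p | γ {p} ≠ 0}, 0 ≤ γ'.real {p} - γ.real {p} := by
    intro p hp
    have hp : γ {p} = 0 := not_not.1 hp
    simp [measureReal_def, hp]
  have key := CyclicallyMonotoneOn.sum_mul_nonneg (S := {p | γ {p} ≠ 0}) hmono hw hS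
  rw [integral_fintype (f := c) .of_finite, integral_fintype (f := c) .of_finite]
  simp only [sub_mul, sum_sub_distrib, sub_nonneg] at key
  simpa only [smul_eq_mul] using key
end

section
/- Let m : X₁ × X₂ → ℝ be a finitely supported function that is a closed 2-flow (both marginal signed measures vanish) and m ≠ 0. Then there exists a point (a₁,a₂) in the support of m with |m(a₁,a₂)| minimal among nonzero values, and a finite sequence of distinct edges alternating in the first and second coordinate, starting at (a₁,a₂), all in the support of m with alternating signs of m of absolute value at least |m(a₁,a₂)|, which eventually revisits a previously visited vertex, yielding a nonzero 2-flow-loop [A'] such that [A'] and m − [A'] form a decomposition of m without cancellations (|m| = |[A']| + |m − [A']| where |·| is the sum of absolute values of coefficients). -/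
/-!
Take `p` with `|m p|` minimal; replacing `m` by `-m` we may assume `m p > 0`. Move from a positive
entry along its column to a negative entry and then along that row to a positive entry. The rows
and columns reachable from `p` this way carry total mass zero, which forces a way back to `p`. A
shortest closed walk through `p` has no chord, so its rows and its columns are distinct: it is an
alternating loop. Scaled by `m p`, the loop has the signs of `m` and, by minimality of `|m p|`, is
dominated by `m` in absolute value, so `m = L + (m - L)` involves no cancellation.
-/

section TwoFlows

variable {X₁ X₂ : Type*} [DecidableEq X₁] [DecidableEq X₂]

/-- Total mass of a finitely supported flow. -/
def flowMass (m : (X₁ × X₂) →₀ ℝ) : ℝ := ∑ p ∈ m.support, |m p|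

/-- A finitely supported 2-flow is closed if both marginal signed measures vanish. -/
def IsClosed2Flow (m : (X₁ × X₂) →₀ ℝ) : Prop :=
  (∀ v : X₁, ∑ p ∈ m.support, (if p.1 = v then m p else 0) = 0) ∧
  (∀ v : X₂, ∑ p ∈ m.support, (if p.2 = v then m p else 0) = 0)

/-- A 2-flow-loop: a closed flow supported on a cyclic alternating sequence of
edges `(a_j, b_j), (a_{j+1}, b_j)` with constant-absolute-value coefficients. -/
def IsTwoFlowLoop (L : (X₁ × X₂) →₀ ℝ) : Prop :=
  ∃ (n : ℕ) (w : ℝ), w ≠ 0 ∧ ∃ (a : Fin (n+1) → X₁) (b : Fin (n+1) → X₂),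
    Function.Injective a ∧ Function.Injective b ∧
    L = w • ∑ j : Fin (n+1),
      (Finsupp.single (a j, b j) (1 : ℝ) - Finsupp.single (a (j + 1), b j) (1 : ℝ))

namespace Relation

variable {α : Type*} {r : α → α → Prop}

theorem TransGen.exists_seq {a b : α} (h : TransGen r a b) :
    ∃ (n : ℕ) (u : ℕ → α), u 0 = a ∧ u (n + 1) = b ∧ ∀ i ≤ n, r (u i) (u (i + 1)) := by
  induction h with
  | @single c hc =>
    refine ⟨0, fun i => if i = 0 then a else c, rfl, rfl, fun i hi => ?_⟩
    obtain rfl : i = 0 := by omega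
    simpa using hc
  | @tail c d _ hcd ih =>
    obtain ⟨n, u, hu0, hun, hu⟩ := ih
    refine ⟨n + 1, fun i => if i ≤ n + 1 then u i else d, by simp [hu0], by simp, fun i hi => ?_⟩
    rcases (by omega : i ≤ n ∨ i = n + 1) with hi | rfl
    · simpa [show i ≤ n + 1 by omega, show i + 1 ≤ n + 1 by omega] using hu i hi
    · simpa [hun] using hcd

theorem exists_seq_skip {u : ℕ → α} {n i d : ℕ} (hu : ∀ k ≤ n, r (u k) (u (k + 1)))
    (hd : i + d ≤ n) (hr : r (u i) (u (i + d + 1))) :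
    ∃ v : ℕ → α, v 0 = u 0 ∧ v (n - d + 1) = u (n + 1) ∧ ∀ k ≤ n - d, r (v k) (v (k + 1)) := by
  refine ⟨fun k => if k ≤ i then u k else u (k + d), by simp, ?_, fun k hk => ?_⟩
  · simp only [show ¬ n - d + 1 ≤ i by omega, if_false, show n - d + 1 + d = n + 1 by omega]
  · rcases lt_trichotomy k i with hki | rfl | hki
    · simpa [hki.le, Nat.succ_le_of_lt hki] using hu k (by omega)
    · simpa [show k + 1 + d = k + d + 1 by omega] using hr
    · simpa [show ¬ k ≤ i by omega, show ¬ k + 1 ≤ i by omega,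
        show k + 1 + d = k + d + 1 by omega] using hu (k + d) (by omega)

theorem TransGen.exists_chordless_seq {a b : α} (h : TransGen r a b) :
    ∃ (n : ℕ) (u : ℕ → α), u 0 = a ∧ u (n + 1) = b ∧ (∀ i ≤ n, r (u i) (u (i + 1))) ∧
      ∀ i j, i + 1 < j → j ≤ n + 1 → ¬ r (u i) (u j) := by
  classical
  have hex := h.exists_seq
  obtain ⟨u, hu0, hun, hu⟩ := Nat.find_spec hex
  refine ⟨Nat.find hex, u, hu0, hun, hu, fun i j hij hj hr => ?_⟩
  obtain ⟨v, hv0, hvn, hv⟩ := exists_seq_skip hu (i := i) (d := j - i - 1) (by omega)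
    (by rwa [show i + (j - i - 1) + 1 = j by omega])
  exact Nat.find_min hex (show Nat.find hex - (j - i - 1) < Nat.find hex by omega)
    ⟨v, hv0.trans hu0, hvn.trans hun, hv⟩

end Relation

theorem Finsupp.sum_univ_single_apply {ι α M : Type*} [Fintype ι] [AddCommMonoid M]
    {f : ι → α} (hf : Function.Injective f) (c : M) (q : α) :
    (∑ j, Finsupp.single (f j) c) q = (Set.range f).indicator (fun _ => c) q := by
  classical
  rw [Finsupp.finsetSum_apply]
  by_cases hq : q ∈ Set.range f
  · obtain ⟨j, rfl⟩ := hq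
    simp [Finsupp.single_apply, hf.eq_iff]
  · rw [Set.indicator_of_notMem hq]
    exact Finset.sum_eq_zero fun j _ => Finsupp.single_eq_of_ne fun h => hq ⟨j, h.symm⟩

section

omit [DecidableEq X₁] [DecidableEq X₂]

/-- A move between positive entries of `m` through the negative entry `(v.1, u.2)`:
along the column of `u`, then along the row of `v`. -/
def FlowStep (m : (X₁ × X₂) →₀ ℝ) (u v : X₁ × X₂) : Prop :=
  0 < m u ∧ m (v.1, u.2) < 0 ∧ 0 < m v

variable {m : (X₁ × X₂) →₀ ℝ} {u v w : X₁ × X₂}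

theorem FlowStep.of_snd_eq (h : FlowStep m u v) (hw : 0 < m w) (hwu : w.2 = u.2) :
    FlowStep m w v := ⟨hw, hwu ▸ h.2.1, h.2.2⟩

theorem FlowStep.of_fst_eq (h : FlowStep m u v) (hw : 0 < m w) (hwv : w.1 = v.1) :
    FlowStep m u w := ⟨h.1, hwv ▸ h.2.1, hw⟩

theorem FlowStep.exists_alternating_cycle {p : X₁ × X₂}
    (h : Relation.TransGen (FlowStep m) p p) :
    ∃ (n : ℕ) (a : Fin (n + 1) → X₁) (b : Fin (n + 1) → X₂),
      Function.Injective a ∧ Function.Injective b ∧ (a 0, b 0) = p ∧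
      (∀ j, 0 < m (a j, b j)) ∧ ∀ j, m (a (j + 1), b j) < 0 := by
  obtain ⟨n, u, hu0, hun, hu, hchord⟩ := h.exists_chordless_seq
  have hsucc (j : Fin (n + 1)) : u ↑(j + 1) = u (↑j + 1) := by
    rw [Fin.val_add_one]
    split_ifs with hj
    · simp [hj, hu0, hun]
    · rfl
  have hpos (k : ℕ) (hk : k ≤ n) : 0 < m (u k) := (hu k hk).1
  refine ⟨n, fun j => (u j).1, fun j => (u j).2, ?_, ?_, by simp [hu0],
    fun j => hpos j (by omega), fun j => by simpa [hsucc] using (hu j (by omega)).2.1⟩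
  -- a repeated row or column of the cycle would be a chord of the shortest walk
  · refine Function.Injective.of_lt_imp_ne fun i j hij heq => ?_
    rw [Fin.lt_def] at hij
    obtain ⟨j', hj'⟩ : ∃ j', (j : ℕ) = j' + 1 := ⟨j - 1, by omega⟩
    rcases Nat.eq_zero_or_pos i with hi | hi
    · refine hchord j' (n + 1) (by omega) le_rfl ((hu j' (by omega)).of_fst_eq ?_ ?_)
      · simpa [hun, hu0] using hpos 0 (Nat.zero_le n)
      · simpa [hun, ← hu0, ← hj', hi] using heq
    · refine hchord (i - 1) j (by omega) (by omega) ((hu (i - 1) (by omega)).of_fst_eq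
        (hpos j (by omega)) ?_)
      rw [Nat.sub_add_cancel hi]
      exact heq.symm
  · refine Function.Injective.of_lt_imp_ne fun i j hij heq => ?_
    rw [Fin.lt_def] at hij
    exact hchord i (j + 1) (by omega) (by omega)
      ((hu j (by omega)).of_snd_eq (hpos i (by omega)) heq)

noncomputable def alternatingLoop {n : ℕ} (a : Fin (n + 1) → X₁) (b : Fin (n + 1) → X₂) :
    (X₁ × X₂) →₀ ℝ :=
  ∑ j, (Finsupp.single (a j, b j) 1 - Finsupp.single (a (j + 1), b j) 1)

theorem alternatingLoop_apply {n : ℕ} (a : Fin (n + 1) → X₁) {b : Fin (n + 1) → X₂}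
    (hb : Function.Injective b) (q : X₁ × X₂) :
    alternatingLoop a b q = (Set.range fun j => (a j, b j)).indicator 1 q -
      (Set.range fun j => (a (j + 1), b j)).indicator 1 q := by
  rw [alternatingLoop, Finset.sum_sub_distrib, Finsupp.sub_apply,
    Finsupp.sum_univ_single_apply (fun i j h => hb (congrArg Prod.snd h)),
    Finsupp.sum_univ_single_apply (fun i j h => hb (congrArg Prod.snd h))]
  rfl

theorem alternatingLoop_apply_mk {n : ℕ} {a : Fin (n + 1) → X₁} {b : Fin (n + 1) → X₂}
    (hb : Function.Injective b) (hpos : ∀ j, 0 < m (a j, b j))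
    (hneg : ∀ j, m (a (j + 1), b j) < 0) (j : Fin (n + 1)) :
    alternatingLoop a b (a j, b j) = 1 := by
  have hN : (a j, b j) ∉ Set.range fun j => (a (j + 1), b j) := by
    rintro ⟨i, hi⟩
    have := hpos j
    rw [← hi] at this
    exact (hneg i).not_gt this
  simp [alternatingLoop_apply a hb, Set.indicator_of_mem (Set.mem_range_self j),
    Set.indicator_of_notMem hN]

theorem alternatingLoop_apply_cases {n : ℕ} {a : Fin (n + 1) → X₁} {b : Fin (n + 1) → X₂}
    (hb : Function.Injective b) (hpos : ∀ j, 0 < m (a j, b j))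
    (hneg : ∀ j, m (a (j + 1), b j) < 0) (q : X₁ × X₂) :
    (alternatingLoop a b q = 1 ∧ 0 < m q) ∨ (alternatingLoop a b q = -1 ∧ m q < 0) ∨
      alternatingLoop a b q = 0 := by
  by_cases hP : q ∈ Set.range fun j => (a j, b j)
  · obtain ⟨j, rfl⟩ := hP
    exact Or.inl ⟨alternatingLoop_apply_mk hb hpos hneg j, hpos j⟩
  rw [alternatingLoop_apply a hb, Set.indicator_of_notMem hP]
  by_cases hN : q ∈ Set.range fun j => (a (j + 1), b j)
  · obtain ⟨j, rfl⟩ := hN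
    simp [Set.indicator_of_mem (Set.mem_range_self j), hneg j]
  · simp [Set.indicator_of_notMem hN]

theorem IsTwoFlowLoop.neg {L : (X₁ × X₂) →₀ ℝ} (h : IsTwoFlowLoop L) : IsTwoFlowLoop (-L) := by
  obtain ⟨n, w, hw, a, b, ha, hb, rfl⟩ := h
  exact ⟨n, -w, neg_ne_zero.2 hw, a, b, ha, hb, (neg_smul w _).symm⟩

theorem flowMass_neg (m : (X₁ × X₂) →₀ ℝ) : flowMass (-m) = flowMass m := by
  simp [flowMass, Finsupp.support_neg]

theorem flowMass_eq_sum_of_support_subset {f : (X₁ × X₂) →₀ ℝ} {s : Finset (X₁ × X₂)}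
    (h : f.support ⊆ s) : flowMass f = ∑ q ∈ s, |f q| :=
  Finset.sum_subset h fun q _ hq => by rw [Finsupp.notMem_support_iff.1 hq, abs_zero]

theorem flowMass_eq_add_flowMass_sub {L : (X₁ × X₂) →₀ ℝ}
    (h : ∀ q, 0 ≤ L q ∧ 0 ≤ m q - L q ∨ L q ≤ 0 ∧ m q - L q ≤ 0) :
    flowMass m = flowMass L + flowMass (m - L) := by
  classical
  rw [flowMass_eq_sum_of_support_subset (Finset.subset_union_left (s₂ := L.support)),
    flowMass_eq_sum_of_support_subset (Finset.subset_union_right (s₁ := m.support)),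
    flowMass_eq_sum_of_support_subset Finsupp.support_sub, ← Finset.sum_add_distrib]
  refine Finset.sum_congr rfl fun q _ => ?_
  simpa using (abs_add_eq_add_abs_iff (L q) (m q - L q)).2 (h q)

def IsLoopSplitting (m : (X₁ × X₂) →₀ ℝ) (p : X₁ × X₂) (L : (X₁ × X₂) →₀ ℝ) : Prop :=
  IsTwoFlowLoop L ∧ L ≠ 0 ∧ p ∈ L.support ∧ (∀ x ∈ L.support, x ∈ m.support) ∧
    (∀ x ∈ L.support, |L x| = |m p|) ∧ flowMass m = flowMass L + flowMass (m - L)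

theorem IsLoopSplitting.neg {p : X₁ × X₂} {L : (X₁ × X₂) →₀ ℝ} (h : IsLoopSplitting m p L) :
    IsLoopSplitting (-m) p (-L) := by
  obtain ⟨hL, hne, hp, hsupp, habs, hmass⟩ := h
  refine ⟨hL.neg, neg_ne_zero.2 hne, by simpa using hp, by simpa using hsupp,
    by simpa using habs, ?_⟩
  rw [flowMass_neg, flowMass_neg, ← neg_sub', flowMass_neg, hmass]

end

variable {m : (X₁ × X₂) →₀ ℝ}

theorem IsClosed2Flow.neg (hm : IsClosed2Flow m) : IsClosed2Flow (-m) := by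
  constructor <;> intro v <;> rw [Finsupp.support_neg, ← neg_eq_zero, ← Finset.sum_neg_distrib]
  · refine (Finset.sum_congr rfl fun q _ => ?_).trans (hm.1 v)
    split_ifs <;> simp
  · refine (Finset.sum_congr rfl fun q _ => ?_).trans (hm.2 v)
    split_ifs <;> simp

theorem IsClosed2Flow.sum_fst_mem (hm : IsClosed2Flow m) (A : Finset X₁) :
    ∑ q ∈ m.support, (if q.1 ∈ A then m q else 0) = 0 := by
  calc ∑ q ∈ m.support, (if q.1 ∈ A then m q else 0)
      = ∑ v ∈ A, ∑ q ∈ m.support, (if q.1 = v then m q else 0) := by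
        rw [Finset.sum_comm]
        exact Finset.sum_congr rfl fun q _ => (Finset.sum_ite_eq A q.1 fun _ => m q).symm
    _ = 0 := Finset.sum_eq_zero fun v _ => hm.1 v

theorem IsClosed2Flow.sum_snd_mem (hm : IsClosed2Flow m) (B : Finset X₂) :
    ∑ q ∈ m.support, (if q.2 ∈ B then m q else 0) = 0 := by
  calc ∑ q ∈ m.support, (if q.2 ∈ B then m q else 0)
      = ∑ v ∈ B, ∑ q ∈ m.support, (if q.2 = v then m q else 0) := by
        rw [Finset.sum_comm]
        exact Finset.sum_congr rfl fun q _ => (Finset.sum_ite_eq B q.2 fun _ => m q).symm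
    _ = 0 := Finset.sum_eq_zero fun v _ => hm.2 v

/- The rows `A` and the columns `B` both carry total mass `0`, and by `hA`, `hB` every entry
contributes at least as much to the columns as to the rows; so every entry contributes equally. -/
theorem IsClosed2Flow.fst_mem_of_snd_mem (hm : IsClosed2Flow m) {A : Finset X₁} {B : Finset X₂}
    (hA : ∀ q, 0 < m q → q.1 ∈ A → q.2 ∈ B) (hB : ∀ q, m q < 0 → q.2 ∈ B → q.1 ∈ A)
    {q : X₁ × X₂} (hq : 0 < m q) (hqB : q.2 ∈ B) : q.1 ∈ A := by
  set excess : X₁ × X₂ → ℝ := fun x => (if x.2 ∈ B then m x else 0) - if x.1 ∈ A then m x else 0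
  have hexcess : ∀ x ∈ m.support, 0 ≤ excess x := by
    intro x _
    by_cases h1 : x.1 ∈ A <;> by_cases h2 : x.2 ∈ B <;>
      simp only [excess, h1, h2, if_true, if_false]
    · exact (sub_self _).ge
    · exact sub_nonneg.2 (not_lt.1 fun h => h2 (hA x h h1))
    · exact sub_nonneg.2 (not_lt.1 fun h => h1 (hB x h h2))
    · exact (sub_self _).ge
  have hsum : ∑ x ∈ m.support, excess x = 0 := by
    rw [Finset.sum_sub_distrib, hm.sum_fst_mem, hm.sum_snd_mem, sub_zero]
  by_contra hqA
  have := (Finset.sum_eq_zero_iff_of_nonneg hexcess).1 hsum q (Finsupp.mem_support_iff.2 hq.ne')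
  simp only [excess, hqA, hqB, if_true, if_false, sub_zero] at this
  exact hq.ne' this

theorem IsClosed2Flow.transGen_flowStep_self (hm : IsClosed2Flow m) {p : X₁ × X₂} (hp : 0 < m p) :
    Relation.TransGen (FlowStep m) p p := by
  set R := Relation.ReflTransGen (FlowStep m) p
  have hRpos {u : X₁ × X₂} (hu : R u) : 0 < m u := by
    rcases hu.cases_tail with rfl | ⟨_, _, h⟩
    exacts [hp, h.2.2]
  classical
  set A : Finset X₁ :=
    (m.support.filter fun v => m v < 0 ∧ ∃ u, R u ∧ u.2 = v.2).image Prod.fst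
  set B : Finset X₂ := (m.support.filter R).image Prod.snd
  have hA (q : X₁ × X₂) (hq : 0 < m q) (hqA : q.1 ∈ A) : q.2 ∈ B := by
    obtain ⟨v, hv, hvq⟩ := Finset.mem_image.1 hqA
    obtain ⟨-, hv, u, hu, huv⟩ := Finset.mem_filter.1 hv
    refine Finset.mem_image.2 ⟨q, Finset.mem_filter.2 ⟨Finsupp.mem_support_iff.2 hq.ne', ?_⟩, rfl⟩
    exact hu.tail ⟨hRpos hu, by rwa [← hvq, huv], hq⟩
  have hB (q : X₁ × X₂) (hq : m q < 0) (hqB : q.2 ∈ B) : q.1 ∈ A := by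
    obtain ⟨u, hu, huq⟩ := Finset.mem_image.1 hqB
    exact Finset.mem_image.2 ⟨q, Finset.mem_filter.2
      ⟨Finsupp.mem_support_iff.2 hq.ne, hq, u, (Finset.mem_filter.1 hu).2, huq⟩, rfl⟩
  have hpB : p.2 ∈ B := Finset.mem_image.2
    ⟨p, Finset.mem_filter.2 ⟨Finsupp.mem_support_iff.2 hp.ne', Relation.ReflTransGen.refl⟩, rfl⟩
  obtain ⟨v, hv, hvp⟩ := Finset.mem_image.1 (hm.fst_mem_of_snd_mem hA hB hp hpB)
  obtain ⟨-, hv, u, hu, huv⟩ := Finset.mem_filter.1 hv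
  exact Relation.TransGen.tail' hu ⟨hRpos hu, by rwa [← hvp, huv], hp⟩

theorem IsClosed2Flow.exists_isLoopSplitting (hm : IsClosed2Flow m) {p : X₁ × X₂}
    (hmin : ∀ q ∈ m.support, |m p| ≤ |m q|) (hp : 0 < m p) :
    ∃ L, IsLoopSplitting m p L := by
  obtain ⟨n, a, b, ha, hb, hab, hpos, hneg⟩ :=
    FlowStep.exists_alternating_cycle (hm.transGen_flowStep_self hp)
  have hcases := alternatingLoop_apply_cases hb hpos hneg
  have hLp : alternatingLoop a b p = 1 := hab ▸ alternatingLoop_apply_mk hb hpos hneg 0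
  have hle (q : X₁ × X₂) (hq : 0 < m q) : m p ≤ m q := by
    simpa [abs_of_pos hp, abs_of_pos hq] using hmin q (Finsupp.mem_support_iff.2 hq.ne')
  have hge (q : X₁ × X₂) (hq : m q < 0) : m q ≤ -m p := by
    have := hmin q (Finsupp.mem_support_iff.2 hq.ne)
    rw [abs_of_pos hp, abs_of_neg hq] at this
    linarith
  refine ⟨m p • alternatingLoop a b, ⟨n, m p, hp.ne', a, b, ha, hb, rfl⟩,
    fun h => by simpa [hLp, hp.ne'] using DFunLike.congr_fun h p,
    by simp [hLp, hp.ne'], fun q hq => ?_, fun q hq => ?_, flowMass_eq_add_flowMass_sub fun q => ?_⟩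
  · rcases hcases q with ⟨-, h⟩ | ⟨-, h⟩ | h
    · exact Finsupp.mem_support_iff.2 h.ne'
    · exact Finsupp.mem_support_iff.2 h.ne
    · simp [h] at hq
  · rcases hcases q with ⟨h, -⟩ | ⟨h, -⟩ | h
    · simp [h]
    · simp [h]
    · simp [h] at hq
  · rcases hcases q with ⟨h, hq⟩ | ⟨h, hq⟩ | h <;>
      simp only [Finsupp.smul_apply, h, smul_eq_mul, mul_one, mul_neg, mul_zero, sub_zero]
    · exact Or.inl ⟨hp.le, by linarith [hle q hq]⟩
    · exact Or.inr ⟨by linarith, by linarith [hge q hq]⟩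
    · simp [le_total]

theorem stmt13 (m : (X₁ × X₂) →₀ ℝ) (hclosed : IsClosed2Flow m) (hne : m ≠ 0) :
    ∃ p ∈ m.support, (∀ q ∈ m.support, |m p| ≤ |m q|) ∧
      ∃ L : (X₁ × X₂) →₀ ℝ, IsTwoFlowLoop L ∧ L ≠ 0 ∧
        p ∈ L.support ∧ (∀ x ∈ L.support, x ∈ m.support) ∧
        (∀ x ∈ L.support, |L x| = |m p|) ∧
        flowMass m = flowMass L + flowMass (m - L) := by
  obtain ⟨p, hp, hmin⟩ :=
    m.support.exists_min_image (fun q => |m q|) (Finsupp.support_nonempty_iff.2 hne)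
  refine ⟨p, hp, hmin, ?_⟩
  rcases (Finsupp.mem_support_iff.1 hp).lt_or_gt with hneg | hpos
  · obtain ⟨L, hL⟩ := hclosed.neg.exists_isLoopSplitting (p := p) (by simpa using hmin)
      (by simpa using hneg)
    exact ⟨-L, neg_neg m ▸ hL.neg⟩
  · exact hclosed.exists_isLoopSplitting hmin hpos

end TwoFlows
end

section
/- Every nonzero finitely supported closed 2-flow on X₁ × X₂ is a finite sum of 2-flow-loops without cancellations: there exist 2-flow-loops [A_1],…,[A_r] with m = Σ_i [A_i] and |m| = Σ_i |[A_i]|. -/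
/-!
If a closed flow `m` is nonzero, some entry is positive; closedness puts a negative entry in
the column of every positive entry and a positive entry in the row of every negative one.
Alternating between the two gives a self-map of the finitely many rows carrying a positive
entry, and a periodic orbit of it is a loop whose positive edges `(a t, b t)` and negative
edges `(a (t + 1), b t)` all lie in the support of `m` with the right signs. Scaling the loop
by the least `|m|` on its edges gives a loop `L` that cancels nothing in `m - L` and clears at
least one entry, so `flowMass (m - L) = flowMass m - flowMass L`, and induction on the size of
the support finishes the proof.
-/

section TwoFlows

variable {X₁ X₂ : Type*} [DecidableEq X₁] [DecidableEq X₂]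

namespace Function

variable {α : Type*} {f : α → α} {x : α}

theorem exists_mem_periodicPts [Finite α] [Nonempty α] (f : α → α) : ∃ x, x ∈ periodicPts f := by
  obtain ⟨x⟩ := ‹Nonempty α›
  obtain ⟨i, j, hij, heq⟩ := Set.finite_univ.exists_lt_map_eq_of_forall_mem
    (f := fun k => f^[k] x) fun _ => Set.mem_univ _
  refine ⟨f^[i] x, mk_mem_periodicPts (Nat.sub_pos_of_lt hij) ?_⟩
  change f^[j - i] (f^[i] x) = f^[i] x
  rw [← iterate_add_apply, Nat.sub_add_cancel hij.le]
  exact heq.symm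

theorem exists_injective_cycle_of_mem_periodicPts (hx : x ∈ periodicPts f) :
    ∃ (n : ℕ) (c : Fin (n + 1) → α), Injective c ∧ ∀ t, c (t + 1) = f (c t) := by
  obtain ⟨n, hn⟩ :=
    Nat.exists_eq_add_one_of_ne_zero (minimalPeriod_pos_of_mem_periodicPts hx).ne'
  refine ⟨n, fun t => f^[t] x, fun s t hst => Fin.ext ?_, fun t => ?_⟩
  · exact iterate_injOn_Iio_minimalPeriod (by simpa [hn] using s.isLt)
      (by simpa [hn] using t.isLt) hst
  · dsimp only
    rw [Fin.val_add, Fin.val_one', Nat.add_mod_mod, ← iterate_succ_apply' f,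
      ← iterate_mod_minimalPeriod_eq (n := t + 1), hn]

theorem exists_injective_cycle [Finite α] [Nonempty α] (f : α → α) :
    ∃ (n : ℕ) (c : Fin (n + 1) → α), Injective c ∧ ∀ t, c (t + 1) = f (c t) :=
  exists_injective_cycle_of_mem_periodicPts (exists_mem_periodicPts f).choose_spec

end Function

open Finsupp Function

theorem Finsupp.mapDomain_apply_eq_sum_ite {α β M : Type*} [AddCommMonoid M] [DecidableEq β]
    (f : α → β) (m : α →₀ M) (b : β) :
    m.mapDomain f b = ∑ p ∈ m.support, if f p = b then m p else 0 := by
  simp [mapDomain, Finsupp.sum, single_apply]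

theorem Finsupp.exists_neg_of_mapDomain_eq_zero {α β : Type*} {f : α → β} {m : α →₀ ℝ}
    (hm : m.mapDomain f = 0) {p : α} (hp : 0 < m p) : ∃ q, f q = f p ∧ m q < 0 := by
  classical
  by_contra! h
  have : 0 < m.mapDomain f (f p) := by
    rw [mapDomain_apply_eq_sum_ite]
    refine Finset.sum_pos' (fun q _ => ?_) ⟨p, mem_support_iff.mpr hp.ne', by simpa using hp⟩
    split_ifs with hq
    · exact h q hq
    · exact le_rfl
  simp [hm] at this

section SumSingleSubSingle

variable {ι α : Type*} [Fintype ι] {P N : ι → α}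

theorem sum_single_sub_single_apply_left (hP : Injective P) (hPN : ∀ s t, P s ≠ N t) (s : ι) :
    (∑ j, (single (P j) (1 : ℝ) - single (N j) 1) : α →₀ ℝ) (P s) = 1 := by
  classical
  simp [single_apply, hP.eq_iff, hPN]

theorem sum_single_sub_single_apply_right (hN : Injective N) (hPN : ∀ s t, P s ≠ N t) (s : ι) :
    (∑ j, (single (P j) (1 : ℝ) - single (N j) 1) : α →₀ ℝ) (N s) = -1 := by
  classical
  simp [single_apply, hN.eq_iff, hPN]

theorem sum_single_sub_single_apply_of_forall_ne {p : α} (hP : ∀ s, P s ≠ p)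
    (hN : ∀ s, N s ≠ p) : (∑ j, (single (P j) (1 : ℝ) - single (N j) 1) : α →₀ ℝ) p = 0 := by
  simp [hP, hN]

end SumSingleSubSingle

theorem flowMass_eq_sum_of_support_subset_s14 {α β : Type*} {m : (α × β) →₀ ℝ}
    {s : Finset (α × β)} (hs : m.support ⊆ s) : flowMass m = ∑ p ∈ s, |m p| :=
  sum_of_support_subset m hs (fun _ x => |x|) fun _ _ => abs_zero

/-- `m = L + (m - L)` without cancellation: `L` has the sign of `m` and `|L| ≤ |m|` pointwise. -/
def IsConformal {α : Type*} (L m : α →₀ ℝ) : Prop := ∀ p, |m p - L p| = |m p| - |L p|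

namespace IsConformal

variable {α : Type*} {L m : α →₀ ℝ}

theorem apply_eq_zero (h : IsConformal L m) {p : α} (hp : m p = 0) : L p = 0 := by
  have := h p
  rw [hp, zero_sub, abs_neg, abs_zero, zero_sub] at this
  exact abs_eq_zero.mp (by linarith [abs_nonneg (L p)])

theorem support_subset (h : IsConformal L m) : L.support ⊆ m.support := fun _ hp =>
  mem_support_iff.mpr fun hm => mem_support_iff.mp hp (h.apply_eq_zero hm)

theorem support_sub_subset (h : IsConformal L m) : (m - L).support ⊆ m.support := fun _ hq =>
  mem_support_iff.mpr fun hm => mem_support_iff.mp hq (by simp [hm, h.apply_eq_zero hm])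

theorem support_sub_ssubset (h : IsConformal L m) {p : α} (hp : L p ≠ 0) (hpm : L p = m p) :
    (m - L).support ⊂ m.support := by
  refine (Finset.ssubset_iff_of_subset h.support_sub_subset).mpr ⟨p, ?_, ?_⟩
  · exact mem_support_iff.mpr (hpm ▸ hp)
  · simp [hpm]

theorem flowMass_sub {β : Type*} {L m : (α × β) →₀ ℝ} (h : IsConformal L m) :
    flowMass (m - L) = flowMass m - flowMass L := by
  rw [flowMass_eq_sum_of_support_subset_s14 h.support_sub_subset,
    flowMass_eq_sum_of_support_subset_s14 h.support_subset, flowMass, ← Finset.sum_sub_distrib]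
  exact Finset.sum_congr rfl fun p _ => h p

end IsConformal

theorem isClosed2Flow_iff_mapDomain {m : (X₁ × X₂) →₀ ℝ} :
    IsClosed2Flow m ↔ m.mapDomain Prod.fst = 0 ∧ m.mapDomain Prod.snd = 0 := by
  simp only [IsClosed2Flow, Finsupp.ext_iff, mapDomain_apply_eq_sum_ite, coe_zero, Pi.zero_apply]

theorem IsClosed2Flow.sub {m L : (X₁ × X₂) →₀ ℝ} (hm : IsClosed2Flow m)
    (hL : IsClosed2Flow L) : IsClosed2Flow (m - L) := by
  rw [isClosed2Flow_iff_mapDomain] at *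
  simp [mapDomain_sub, hm, hL]

theorem IsClosed2Flow.exists_neg_of_pos {m : (X₁ × X₂) →₀ ℝ} (hm : IsClosed2Flow m)
    {x : X₁} {y : X₂} (h : 0 < m (x, y)) : ∃ x', m (x', y) < 0 := by
  obtain ⟨⟨x', _⟩, rfl, hq⟩ :=
    exists_neg_of_mapDomain_eq_zero (isClosed2Flow_iff_mapDomain.mp hm).2 h
  exact ⟨x', hq⟩

theorem IsClosed2Flow.exists_pos_of_neg {m : (X₁ × X₂) →₀ ℝ} (hm : IsClosed2Flow m)
    {x : X₁} {y : X₂} (h : m (x, y) < 0) : ∃ y', 0 < m (x, y') := by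
  have hm' : (-m).mapDomain Prod.fst = 0 := by
    rw [← zero_sub, mapDomain_sub, mapDomain_zero, (isClosed2Flow_iff_mapDomain.mp hm).1,
      sub_zero]
  obtain ⟨⟨_, y'⟩, rfl, hq⟩ :=
    exists_neg_of_mapDomain_eq_zero hm' (p := (x, y)) (by simpa using h)
  exact ⟨y', by simpa using hq⟩

theorem IsTwoFlowLoop.isClosed2Flow {L : (X₁ × X₂) →₀ ℝ} (hL : IsTwoFlowLoop L) :
    IsClosed2Flow L := by
  obtain ⟨n, w, -, a, b, -, -, rfl⟩ := hL
  rw [isClosed2Flow_iff_mapDomain]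
  simp only [mapDomain_smul, mapDomain_finsetSum, mapDomain_sub, mapDomain_single, sub_self,
    smul_zero, Finset.sum_sub_distrib, and_true]
  rw [Fintype.sum_equiv (Equiv.addRight (1 : Fin (n + 1))) (fun j => single (a (j + 1)) (1 : ℝ))
    (fun j => single (a j) 1) fun _ => rfl, sub_self, smul_zero]

theorem IsClosed2Flow.exists_alternating_cycle {m : (X₁ × X₂) →₀ ℝ} (hm : IsClosed2Flow m)
    (hne : m ≠ 0) :
    ∃ (n : ℕ) (a : Fin (n + 1) → X₁) (b : Fin (n + 1) → X₂), Injective a ∧ Injective b ∧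
      (∀ t, 0 < m (a t, b t)) ∧ ∀ t, m (a (t + 1), b t) < 0 := by
  set A := {x : X₁ | ∃ y, 0 < m (x, y)}
  set B := {y : X₂ | ∃ x, m (x, y) < 0}
  choose posCol hposCol using fun x : A =>
    let ⟨y, hy⟩ := x.2; (⟨⟨y, hm.exists_neg_of_pos hy⟩, hy⟩ : ∃ y : B, 0 < m (x, y))
  choose negRow hnegRow using fun y : B =>
    let ⟨x, hx⟩ := y.2; (⟨⟨x, hm.exists_pos_of_neg hx⟩, hx⟩ : ∃ x : A, m (x, y) < 0)
  have : Finite A := Set.Finite.to_subtype <| (m.support.finite_toSet.image Prod.fst).subset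
    fun x ⟨y, hy⟩ => ⟨(x, y), mem_support_iff.mpr hy.ne', rfl⟩
  have : Nonempty A := by
    obtain ⟨⟨x, y⟩, hxy⟩ := DFunLike.ne_iff.mp hne
    rcases (show m (x, y) ≠ 0 from hxy).lt_or_gt with hneg | hpos
    · exact ⟨⟨x, hm.exists_pos_of_neg hneg⟩⟩
    · exact ⟨⟨x, y, hpos⟩⟩
  obtain ⟨n, c, hc, hcycle⟩ := exists_injective_cycle (negRow ∘ posCol)
  refine ⟨n, fun t => c t, fun t => posCol (c t), Subtype.val_injective.comp hc,
    fun s t hst => ?_, fun t => hposCol (c t), fun t => ?_⟩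
  -- the column `b t` determines the next row `a (t + 1)`, so distinct rows force distinct columns
  · have := congrArg negRow (Subtype.ext hst)
    rw [← comp_apply (f := negRow), ← hcycle, ← comp_apply (f := negRow), ← hcycle] at this
    exact add_right_cancel (hc this)
  · simp only [hcycle]
    exact hnegRow _

theorem exists_conformal_loop_of_alternating_cycle {m : (X₁ × X₂) →₀ ℝ} {n : ℕ}
    {a : Fin (n + 1) → X₁} {b : Fin (n + 1) → X₂} (ha : Injective a) (hb : Injective b)
    (hpos : ∀ t, 0 < m (a t, b t)) (hneg : ∀ t, m (a (t + 1), b t) < 0) :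
    ∃ L, IsTwoFlowLoop L ∧ IsConformal L m ∧ ∃ p, L p ≠ 0 ∧ L p = m p := by
  classical
  set P : Fin (n + 1) → X₁ × X₂ := fun t => (a t, b t)
  set N : Fin (n + 1) → X₁ × X₂ := fun t => (a (t + 1), b t)
  have hP : Injective P := fun s t h => hb (congrArg Prod.snd h)
  have hN : Injective N := fun s t h => hb (congrArg Prod.snd h)
  have hPN : ∀ s t, P s ≠ N t := fun s t h =>
    lt_asymm (hpos s) (by rw [show (a s, b s) = (a (t + 1), b t) from h]; exact hneg t)
  obtain ⟨q, hq, hqmin⟩ :=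
    (Finset.univ.image P ∪ Finset.univ.image N).exists_min_image (fun p => |m p|) ⟨P 0, by simp⟩
  simp only [Finset.mem_union, Finset.mem_image, Finset.mem_univ, true_and] at hq
  set w := |m q| with hw_def
  have hwP : ∀ s, w ≤ m (P s) := fun s =>
    (hqmin (P s) (by simp)).trans (abs_of_pos (hpos s)).le
  have hwN : ∀ s, m (N s) ≤ -w := fun s =>
    le_neg.mpr <| (hqmin (N s) (by simp)).trans (abs_of_neg (hneg s)).le
  have hw : 0 < w := by
    rcases hq with ⟨s, rfl⟩ | ⟨s, rfl⟩
    · exact abs_pos_of_pos (hpos s)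
    · exact abs_pos_of_neg (hneg s)
  set L := w • (∑ j, (single (P j) (1 : ℝ) - single (N j) 1))
  have hLP : ∀ s, L (P s) = w := fun s => by
    simp only [L, Finsupp.smul_apply, sum_single_sub_single_apply_left hP hPN, smul_eq_mul,
      mul_one]
  have hLN : ∀ s, L (N s) = -w := fun s => by
    simp only [L, Finsupp.smul_apply, sum_single_sub_single_apply_right hN hPN, smul_eq_mul,
      mul_neg_one]
  refine ⟨L, ⟨n, w, hw.ne', a, b, ha, hb, rfl⟩, fun p => ?_, q, ?_⟩
  · by_cases hpP : ∃ s, P s = p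
    · obtain ⟨s, rfl⟩ := hpP
      rw [hLP, abs_of_pos (hpos s), abs_of_pos hw, abs_of_nonneg (sub_nonneg.mpr (hwP s))]
    by_cases hpN : ∃ s, N s = p
    · obtain ⟨s, rfl⟩ := hpN
      rw [hLN, abs_of_neg (hneg s), abs_neg, abs_of_pos hw, abs_of_nonpos (by linarith [hwN s])]
      ring
    push Not at hpP hpN
    simp only [L, Finsupp.smul_apply, sum_single_sub_single_apply_of_forall_ne hpP hpN,
      smul_eq_mul, mul_zero, sub_zero, abs_zero]
  · rcases hq with ⟨s, rfl⟩ | ⟨s, rfl⟩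
    · exact ⟨hLP s ▸ hw.ne', by rw [hLP, hw_def, abs_of_pos (hpos s)]⟩
    · exact ⟨hLN s ▸ neg_ne_zero.mpr hw.ne', by rw [hLN, hw_def, abs_of_neg (hneg s), neg_neg]⟩

theorem stmt14_general (m : (X₁ × X₂) →₀ ℝ) (hclosed : IsClosed2Flow m) :
    ∃ (r : ℕ) (L : Fin r → ((X₁ × X₂) →₀ ℝ)),
      (∀ i, IsTwoFlowLoop (L i)) ∧
      m = ∑ i, L i ∧
      flowMass m = ∑ i, flowMass (L i) := by
  induction hcard : m.support.card using Nat.strong_induction_on generalizing m with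
  | _ k ih =>
  by_cases hm : m = 0
  · exact ⟨0, Fin.elim0, fun i => i.elim0, by simp [hm], by simp [hm, flowMass]⟩
  obtain ⟨n, a, b, ha, hb, hpos, hneg⟩ := hclosed.exists_alternating_cycle hm
  obtain ⟨L, hL, hconf, p, hp, hpm⟩ := exists_conformal_loop_of_alternating_cycle ha hb hpos hneg
  obtain ⟨r, Ls, hLs, hsum, hmass⟩ :=
    ih _ (hcard ▸ Finset.card_lt_card (hconf.support_sub_ssubset hp hpm)) (m - L)
      (hclosed.sub hL.isClosed2Flow) rfl
  refine ⟨r + 1, Fin.cons L Ls, Fin.cases hL hLs, ?_, ?_⟩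
  · rw [Fin.sum_cons, ← hsum, add_sub_cancel]
  · simp only [Fin.sum_univ_succ, Fin.cons_zero, Fin.cons_succ]
    rw [← hmass, hconf.flowMass_sub, add_sub_cancel]

theorem stmt14 (m : (X₁ × X₂) →₀ ℝ) (hclosed : IsClosed2Flow m) (hne : m ≠ 0) :
    ∃ (r : ℕ) (L : Fin r → ((X₁ × X₂) →₀ ℝ)),
      (∀ i, IsTwoFlowLoop (L i)) ∧
      m = ∑ i, L i ∧
      flowMass m = ∑ i, flowMass (L i) :=
  stmt14_general m hclosed

end TwoFlows
end

section
/- Let X₁, X₂ be countable sets and c : X₁ × X₂ → (−∞,∞] a cost. If γ is a probability measure on X₁ × X₂ with finite cost whose support is c-cyclically monotone, then γ is optimal: for every probability measure γ̄ with the same two marginals and finite cost, ∫ c dγ ≤ ∫ c dγ̄. -/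
open MeasureTheory
open scoped ENNReal

/-- The nonnegative part of an extended real, as an `ℝ≥0∞`-valued quantity. -/
noncomputable def erealPos (y : EReal) : ℝ≥0∞ :=
  if y = ⊤ then ⊤ else ENNReal.ofReal y.toReal

/-- The (possibly infinite) cost `∫ c dγ` of a measure against an
`(-∞,∞]`-valued cost: positive part minus negative part, in `EReal`. -/
noncomputable def ecost {Z : Type*} [MeasurableSpace Z] (c : Z → EReal)
    (γ : Measure Z) : EReal :=
  ((∫⁻ z, erealPos (c z) ∂γ : ℝ≥0∞) : EReal) - ((∫⁻ z, erealPos (-(c z)) ∂γ : ℝ≥0∞) : EReal)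

/-!
Put `a z = γ {z}` and `b z = γbar {z}`. Equal marginals make `(a, b)` a closed flow on the
bipartite graph `X₁ ⊔ X₂`, and such a flow is a countable nonnegative combination of closed
alternating loops `x₀ y₀ x₁ y₁ ⋯ x₀`: `a` is carried by the edges `(xᵢ, yᵢ)` and `b` by the edges
`(xᵢ₊₁, yᵢ)`. To find the combination, enumerate the (countably many) loops and peel each one off
as much as possible. Whatever remains still has equal marginals; if it were nonzero, following
its mass out of a row would produce a loop inside it, contradicting the maximality of the step
at which that loop was peeled. Every loop of positive weight has its `a`-edges in the support of
`γ`, so cyclical monotonicity compares the costs loop by loop, and summing gives the claim.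
Positive and negative parts of the cost are kept apart in `ℝ≥0∞`, where all these sums exist.
-/

open Finset
open scoped Classical

namespace OptimalTransport

variable {ι κ α β : Type*}

noncomputable def pointCount [Fintype κ] (e : κ → ι) (s : ι) : ℝ≥0∞ :=
  ∑ k, if e k = s then 1 else 0

section pointCount

variable [Fintype κ]

theorem tsum_mul_pointCount (e : κ → ι) (f : ι → ℝ≥0∞) :
    ∑' s, f s * pointCount e s = ∑ k, f (e k) := by
  simp_rw [pointCount, Finset.mul_sum, mul_ite, mul_one, mul_zero]
  rw [Summable.tsum_finsetSum fun _ _ => ENNReal.summable]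
  simp [eq_comm]

theorem pointCount_apply_ne_zero (e : κ → ι) (k : κ) : pointCount e (e k) ≠ 0 := by
  simp only [pointCount, ne_eq, sum_eq_zero_iff, mem_univ, true_imp_iff, not_forall]
  exact ⟨k, by simp⟩

theorem pointCount_le_card (e : κ → ι) (s : ι) : pointCount e s ≤ Fintype.card κ := by
  calc pointCount e s ≤ ∑ _k : κ, (1 : ℝ≥0∞) := sum_le_sum fun k _ => by split_ifs <;> simp
    _ = Fintype.card κ := by simp

theorem pointCount_comp_equiv (e : κ → ι) (σ : κ ≃ κ) : pointCount (e ∘ σ) = pointCount e :=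
  funext fun s => σ.sum_comp fun k => if e k = s then 1 else 0

theorem tsum_pointCount_fst (e : κ → α × β) (x : α) :
    ∑' y, pointCount e (x, y) = pointCount (Prod.fst ∘ e) x := by
  simp_rw [pointCount, Function.comp_apply, Prod.ext_iff, ite_and]
  rw [Summable.tsum_finsetSum fun _ _ => ENNReal.summable]
  refine sum_congr rfl fun k _ => ?_
  split_ifs <;> simp [eq_comm]

theorem tsum_pointCount_snd (e : κ → α × β) (y : β) :
    ∑' x, pointCount e (x, y) = pointCount (Prod.snd ∘ e) y := by
  simp_rw [pointCount, Function.comp_apply, Prod.ext_iff, ite_and]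
  rw [Summable.tsum_finsetSum fun _ _ => ENNReal.summable]
  refine sum_congr rfl fun k _ => ?_
  split_ifs <;> simp_all [eq_comm]

@[simp]
theorem pointCount_sumMap_inl {κ' ι' : Type*} [Fintype κ'] (f : κ → ι) (g : κ' → ι') (s : ι) :
    pointCount (Sum.map f g) (Sum.inl s) = pointCount f s := by
  simp [pointCount, Fintype.sum_sum_type]

@[simp]
theorem pointCount_sumMap_inr {κ' ι' : Type*} [Fintype κ'] (f : κ → ι) (g : κ' → ι') (s : ι') :
    pointCount (Sum.map f g) (Sum.inr s) = pointCount g s := by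
  simp [pointCount, Fintype.sum_sum_type]

theorem exists_mul_pointCount_le (e : κ → ι) (r : ι → ℝ≥0∞) (hr : ∀ k, r (e k) ≠ 0) :
    ∃ ε ≠ 0, ∀ s, ε * pointCount e s ≤ r s := by
  set m := Finset.univ.inf fun k => r (e k)
  have hm : m ≠ 0 := (pos_iff_ne_zero.1 ((Finset.lt_inf_iff ENNReal.zero_lt_top).2
    fun k _ => pos_iff_ne_zero.2 (hr k)))
  refine ⟨m / Fintype.card κ, (ENNReal.div_pos hm (ENNReal.natCast_ne_top _)).ne', fun s => ?_⟩
  by_cases hs : ∃ k, e k = s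
  · obtain ⟨k, rfl⟩ := hs
    have hκ : (Fintype.card κ : ℝ≥0∞) ≠ 0 := by
      have : Nonempty κ := ⟨k⟩
      simp
    calc m / Fintype.card κ * pointCount e (e k) ≤ m / Fintype.card κ * Fintype.card κ :=
          mul_le_mul_right (pointCount_le_card e _) _
      _ = m := ENNReal.div_mul_cancel hκ (ENNReal.natCast_ne_top _)
      _ ≤ r (e k) := Finset.inf_le (mem_univ k)
  · simp_all [pointCount]

end pointCount

theorem _root_.ENNReal.tsum_tsub_eq_of_tsum_eq {f g F G : ι → ℝ≥0∞}
    (hfg : ∑' z, f z = ∑' z, g z) (hFG : ∑' z, F z = ∑' z, G z) (hF : ∑' z, F z ≠ ⊤)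
    (hFf : F ≤ f) (hGg : G ≤ g) : ∑' z, (f z - F z) = ∑' z, (g z - G z) := by
  have key : ∀ {f F : ι → ℝ≥0∞}, F ≤ f → ∑' z, (f z - F z) + ∑' z, F z = ∑' z, f z :=
    fun h => by rw [← ENNReal.tsum_add]; exact tsum_congr fun z => tsub_add_cancel_of_le (h z)
  rw [← ENNReal.add_left_inj hF, key hFf, hFG, key hGg, hfg]

def SameMarginals (a b : α × β → ℝ≥0∞) : Prop :=
  (∀ x, ∑' y, a (x, y) = ∑' y, b (x, y)) ∧ ∀ y, ∑' x, a (x, y) = ∑' x, b (x, y)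

namespace SameMarginals

variable {a b A B : α × β → ℝ≥0∞}

theorem tsum_eq (h : SameMarginals a b) : ∑' z, a z = ∑' z, b z := by
  simp_rw [ENNReal.tsum_prod', h.1]

theorem tsum_mul {ν : Type*} (c : ν → ℝ≥0∞) {F G : ν → α × β → ℝ≥0∞}
    (h : ∀ j, SameMarginals (F j) (G j)) :
    SameMarginals (fun z => ∑' j, c j * F j z) (fun z => ∑' j, c j * G j z) := by
  constructor
  · intro x
    rw [ENNReal.tsum_comm, ENNReal.tsum_comm (f := fun y j => c j * G j (x, y))]
    simp_rw [ENNReal.tsum_mul_left, (h _).1 x]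
  · intro y
    rw [ENNReal.tsum_comm, ENNReal.tsum_comm (f := fun x j => c j * G j (x, y))]
    simp_rw [ENNReal.tsum_mul_left, (h _).2 y]

theorem tsub (hab : SameMarginals a b) (hAB : SameMarginals A B) (hAa : A ≤ a) (hBb : B ≤ b)
    (ha : ∑' z, a z ≠ ⊤) : SameMarginals (a - A) (b - B) := by
  refine ⟨fun x => ENNReal.tsum_tsub_eq_of_tsum_eq (hab.1 x) (hAB.1 x) ?_ (fun y => hAa _)
    (fun y => hBb _), fun y => ENNReal.tsum_tsub_eq_of_tsum_eq (hab.2 y) (hAB.2 y) ?_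
    (fun x => hAa _) (fun x => hBb _)⟩
  · refine ne_top_of_le_ne_top ha ((ENNReal.tsum_le_tsum fun y => hAa (x, y)).trans ?_)
    rw [ENNReal.tsum_prod']
    exact ENNReal.le_tsum x
  · refine ne_top_of_le_ne_top ha ((ENNReal.tsum_le_tsum fun x => hAa (x, y)).trans ?_)
    rw [ENNReal.tsum_prod', ENNReal.tsum_comm]
    exact ENNReal.le_tsum y

end SameMarginals

/-- The closed walk `xs 0, ys 0, xs 1, ys 1, …, xs 0` in the bipartite graph `α ⊔ β`. -/
structure AltLoop (α β : Type*) where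
  len : ℕ
  xs : Fin len → α
  ys : Fin len → β

namespace AltLoop

variable (L : AltLoop α β)

def edge (i : Fin L.len) : α × β := (L.xs i, L.ys i)

def nextEdge (i : Fin L.len) : α × β := (L.xs (finRotate _ i), L.ys i)

/-- Both kinds of edges in one family, so that peeling a loop off the pair `(a, b)` is peeling a
single function on `(α × β) ⊕ (α × β)`. -/
def edges : Fin L.len ⊕ Fin L.len → (α × β) ⊕ (α × β) := Sum.map L.edge L.nextEdge

theorem sameMarginals_pointCount : SameMarginals (pointCount L.edge) (pointCount L.nextEdge) :=
  ⟨fun x => by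
    simp_rw [tsum_pointCount_fst]
    exact congrFun (pointCount_comp_equiv L.xs (finRotate _)).symm x,
   fun y => by simp_rw [tsum_pointCount_snd]; rfl⟩

instance : Nonempty (AltLoop α β) := ⟨⟨0, Fin.elim0, Fin.elim0⟩⟩

instance [Countable α] [Countable β] : Countable (AltLoop α β) := by
  refine Function.Injective.countable
    (f := fun L : AltLoop α β => (⟨L.len, L.xs, L.ys⟩ : Σ n, (Fin n → α) × (Fin n → β))) ?_
  rintro ⟨n, xs, ys⟩ ⟨m, xs', ys'⟩ h
  simp only [Sigma.mk.injEq] at h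
  obtain ⟨rfl, h⟩ := h
  simp_all

end AltLoop

section Peeling

noncomputable def maxScale (r u : ι → ℝ≥0∞) : ℝ≥0∞ :=
  ⨆ (t : ℝ≥0∞) (_ : ∀ i, t * u i ≤ r i), t

theorem maxScale_mul_le (r u : ι → ℝ≥0∞) (i : ι) : maxScale r u * u i ≤ r i := by
  simp only [maxScale, ENNReal.iSup_mul]
  exact iSup₂_le fun t ht => ht i

theorem le_maxScale {r u : ι → ℝ≥0∞} {t : ℝ≥0∞} (h : ∀ i, t * u i ≤ r i) : t ≤ maxScale r u :=
  le_iSup₂ (f := fun t (_ : ∀ i, t * u i ≤ r i) => t) t h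

variable (w : ι → ℝ≥0∞) (v : ℕ → ι → ℝ≥0∞)

noncomputable def greedySum : ℕ → ι → ℝ≥0∞
  | 0 => 0
  | k + 1 => greedySum k + maxScale (w - greedySum k) (v k) • v k

noncomputable def greedyCoeff (k : ℕ) : ℝ≥0∞ := maxScale (w - greedySum w v k) (v k)

theorem greedySum_succ (k : ℕ) (i : ι) :
    greedySum w v (k + 1) i = greedySum w v k i + greedyCoeff w v k * v k i := rfl

theorem greedySum_eq_sum (k : ℕ) (i : ι) :
    greedySum w v k i = ∑ j ∈ range k, greedyCoeff w v j * v j i := by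
  induction k with
  | zero => rfl
  | succ k ih => rw [greedySum_succ, ih, sum_range_succ]

theorem greedyCoeff_mul_le (k : ℕ) (i : ι) :
    greedyCoeff w v k * v k i ≤ w i - greedySum w v k i :=
  maxScale_mul_le _ _ i

theorem greedySum_le (k : ℕ) (i : ι) : greedySum w v k i ≤ w i := by
  induction k with
  | zero => exact zero_le
  | succ k ih =>
    rw [greedySum_succ]
    exact (add_le_add_right (greedyCoeff_mul_le w v k i) _).trans_eq (add_tsub_cancel_of_le ih)

theorem tsum_greedyCoeff_mul_le (i : ι) : ∑' j, greedyCoeff w v j * v j i ≤ w i := by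
  rw [ENNReal.tsum_eq_iSup_nat]
  exact iSup_le fun k => (greedySum_eq_sum w v k i).symm.trans_le (greedySum_le w v k i)

theorem exists_maximal_tsum_mul_le (hw : ∀ i, w i ≠ ⊤) :
    ∃ c : ℕ → ℝ≥0∞, (∀ i, ∑' j, c j * v j i ≤ w i) ∧
      ∀ j ε, (∃ i, v j i ≠ 0) → (∀ i, ε * v j i ≤ w i - ∑' k, c k * v k i) → ε = 0 := by
  refine ⟨greedyCoeff w v, tsum_greedyCoeff_mul_le w v, fun j ε ⟨i₀, hi₀⟩ hε => ?_⟩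
  set c := greedyCoeff w v j
  have hfits : ∀ i, (c + ε) * v j i ≤ w i - greedySum w v j i := by
    intro i
    have hS : greedySum w v (j + 1) i ≤ ∑' k, greedyCoeff w v k * v k i := by
      rw [greedySum_eq_sum]; exact ENNReal.sum_le_tsum _
    have h := (hε i).trans (tsub_le_tsub_left hS _)
    rw [greedySum_succ, ← tsub_tsub] at h
    rw [add_mul]
    exact add_le_of_le_tsub_left_of_le (greedyCoeff_mul_le w v j i) h
  have hc : c ≠ ⊤ := by
    intro hc
    have : c * v j i₀ ≤ w i₀ := (greedyCoeff_mul_le w v j i₀).trans tsub_le_self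
    rw [hc, ENNReal.top_mul hi₀, top_le_iff] at this
    exact hw i₀ this
  have : c + ε ≤ c + 0 := by rw [add_zero]; exact le_maxScale hfits
  exact le_zero_iff.1 ((ENNReal.add_le_add_iff_left hc).1 this)

end Peeling

section Cycles

theorem _root_.Relation.TransGen.exists_fin_path {r : α → α → Prop} {a b : α}
    (h : Relation.TransGen r a b) : ∃ (n : ℕ) (x : Fin (n + 1) → α),
      x 0 = a ∧ r (x (Fin.last n)) b ∧ ∀ i : Fin n, r (x i.castSucc) (x i.succ) := by
  induction h with
  | single hab => exact ⟨0, fun _ => a, rfl, hab, fun i => i.elim0⟩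
  | @tail b c _ hbc ih =>
    obtain ⟨n, x, hx0, hxb, hx⟩ := ih
    refine ⟨n + 1, Fin.snoc x b, ?_, by simpa using hbc, fun i => ?_⟩
    · rw [← Fin.castSucc_zero, Fin.snoc_castSucc, hx0]
    · induction i using Fin.lastCases with
      | last => simpa using hxb
      | cast j => rw [Fin.succ_castSucc, Fin.snoc_castSucc, Fin.snoc_castSucc]; exact hx j

theorem _root_.Relation.TransGen.exists_fin_cycle {r : α → α → Prop} {a : α}
    (h : Relation.TransGen r a a) :
    ∃ (n : ℕ) (x : Fin (n + 1) → α), ∀ i, r (x i) (x (finRotate _ i)) := by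
  obtain ⟨n, x, hx0, hxa, hx⟩ := h.exists_fin_path
  refine ⟨n, x, fun i => ?_⟩
  induction i using Fin.lastCases with
  | last => simpa [hx0] using hxa
  | cast j => simpa [finRotate_apply, Fin.coeSucc_eq_succ] using hx j

variable {f g : α × β → ℝ≥0∞}

def AltStep (f g : α × β → ℝ≥0∞) (x x' : α) : Prop := ∃ y, f (x, y) ≠ 0 ∧ g (x', y) ≠ 0

theorem exists_altLoop_of_transGen {x₀ : α} (h : Relation.TransGen (AltStep f g) x₀ x₀) :
    ∃ L : AltLoop α β, L.len ≠ 0 ∧ ∀ i, f (L.edge i) ≠ 0 ∧ g (L.nextEdge i) ≠ 0 := by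
  obtain ⟨n, x, hx⟩ := h.exists_fin_cycle
  choose y hy using hx
  exact ⟨⟨n + 1, x, y⟩, n.succ_ne_zero, hy⟩

/-- The rows of `R` send their `f`-mass into the columns of `Y`, which receive their `g`-mass
only from `R`; by equality of marginals every row of `R` then sends all of its `g`-mass into `Y`,
in particular the row of `x₀`, which carries mass. -/
theorem exists_mem_ne_zero_of_closed (hfg : SameMarginals f g) (hg : ∑' z, g z ≠ ⊤)
    {R : Set α} {Y : Set β} (hRY : ∀ x ∈ R, ∀ y, f (x, y) ≠ 0 → y ∈ Y)
    (hYR : ∀ y ∈ Y, ∀ x, g (x, y) ≠ 0 → x ∈ R) {x₀ : α} {y₀ : β} (hx₀ : x₀ ∈ R)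
    (h₀ : f (x₀, y₀) ≠ 0) : ∃ y ∈ Y, g (x₀, y) ≠ 0 := by
  by_contra! hcon
  have hsubY : ∀ x : R, ∑' y : Y, f (x, y) = ∑' y, f (x, y) := fun x =>
    tsum_subtype_eq_of_support_subset fun y hy => hRY x x.2 y hy
  have hsubR : ∀ y : Y, ∑' x : R, g (x, y) = ∑' x, g (x, y) := fun y =>
    tsum_subtype_eq_of_support_subset fun x hx => hYR y y.2 x hx
  have hbalance : ∑' x : R, ∑' y, g (x, y) ≤ ∑' x : R, ∑' y : Y, g (x, y) :=
    calc ∑' x : R, ∑' y, g (x, y) = ∑' y : Y, ∑' x : R, f (x, y) := by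
          simp_rw [← hfg.1, ← hsubY]; exact ENNReal.tsum_comm
      _ ≤ ∑' y : Y, ∑' x, f (x, y) := ENNReal.tsum_le_tsum fun y =>
          ENNReal.tsum_comp_le_tsum_of_injective Subtype.val_injective fun x => f (x, y)
      _ = ∑' x : R, ∑' y : Y, g (x, y) := by
          simp_rw [hfg.2, ← hsubR]; exact ENNReal.tsum_comm
  have hrow : ∀ x : R, ∑' y : Y, g (x, y) ≤ ∑' y, g (x, y) := fun x =>
    ENNReal.tsum_comp_le_tsum_of_injective Subtype.val_injective fun y => g (x, y)
  have hfin : ∑' x : R, ∑' y : Y, g (x, y) ≠ ⊤ := by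
    refine ne_top_of_le_ne_top hg ?_
    calc ∑' x : R, ∑' y : Y, g (x, y) ≤ ∑' x : R, ∑' y, g (x, y) := ENNReal.tsum_le_tsum hrow
      _ ≤ ∑' x, ∑' y, g (x, y) :=
          ENNReal.tsum_comp_le_tsum_of_injective Subtype.val_injective fun x => ∑' y, g (x, y)
      _ = ∑' z, g z := ENNReal.tsum_prod'.symm
  have hx₀Y : ∑' y : Y, g (x₀, y) = 0 := ENNReal.tsum_eq_zero.2 fun y => hcon y y.2
  have hx₀row : ∑' y, g (x₀, y) ≠ 0 := by
    rw [← hfg.1]; exact fun h => h₀ (ENNReal.tsum_eq_zero.1 h y₀)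
  refine hbalance.not_gt (ENNReal.tsum_lt_tsum (i := ⟨x₀, hx₀⟩) hfin hrow ?_)
  rw [hx₀Y]
  exact pos_iff_ne_zero.2 hx₀row

theorem exists_altLoop (hfg : SameMarginals f g) (hg : ∑' z, g z ≠ ⊤) {z₀ : α × β}
    (h₀ : f z₀ ≠ 0) :
    ∃ L : AltLoop α β, L.len ≠ 0 ∧ ∀ i, f (L.edge i) ≠ 0 ∧ g (L.nextEdge i) ≠ 0 := by
  set R := {x | Relation.ReflTransGen (AltStep f g) z₀.1 x}
  obtain ⟨y, ⟨x, hx, hxy⟩, hy⟩ := exists_mem_ne_zero_of_closed (R := R)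
    (Y := {y | ∃ x ∈ R, f (x, y) ≠ 0}) hfg hg (fun x hx y hxy => ⟨x, hx, hxy⟩)
    (fun y ⟨x, hx, hxy⟩ x' hx'y => hx.tail ⟨y, hxy, hx'y⟩) Relation.ReflTransGen.refl h₀
  exact exists_altLoop_of_transGen (Relation.TransGen.tail' hx ⟨y, hxy, hy⟩)

theorem SameMarginals.eq_zero_of_forall_altLoop (hfg : SameMarginals f g)
    (hg : ∑' z, g z ≠ ⊤) (h : ∀ (L : AltLoop α β) ε, L.len ≠ 0 →
      (∀ s, ε * pointCount L.edges s ≤ Sum.elim f g s) → ε = 0) : f = 0 ∧ g = 0 := by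
  have hf : f = 0 := by
    by_contra! hf
    obtain ⟨z₀, hz₀⟩ := Function.ne_iff.1 hf
    obtain ⟨L, hlen, hL⟩ := exists_altLoop hfg hg hz₀
    obtain ⟨ε, hε, hεle⟩ := exists_mul_pointCount_le L.edges (Sum.elim f g)
      (by rintro (i | i); exacts [(hL i).1, (hL i).2])
    exact hε (h L ε hlen hεle)
  refine ⟨hf, funext fun ⟨x, y⟩ => ?_⟩
  have hrow := hfg.1 x
  simp only [hf, Pi.zero_apply, tsum_zero] at hrow
  exact ENNReal.tsum_eq_zero.1 hrow.symm y

end Cycles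

section Decomposition

variable [Countable α] [Countable β] {a b : α × β → ℝ≥0∞}

theorem exists_altLoop_decomposition (hab : SameMarginals a b) (ha : ∑' z, a z ≠ ⊤) :
    ∃ (c : ℕ → ℝ≥0∞) (L : ℕ → AltLoop α β),
      (∀ z, a z = ∑' j, c j * pointCount (L j).edge z) ∧
      ∀ z, b z = ∑' j, c j * pointCount (L j).nextEdge z := by
  obtain ⟨L, hL⟩ := exists_surjective_nat (AltLoop α β)
  have hb : ∑' z, b z ≠ ⊤ := hab.tsum_eq ▸ ha
  obtain ⟨c, hle, hmax⟩ := exists_maximal_tsum_mul_le (Sum.elim a b)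
    (fun j => pointCount (L j).edges)
    (Sum.rec (ENNReal.ne_top_of_tsum_ne_top ha) (ENNReal.ne_top_of_tsum_ne_top hb))
  set A := fun z => ∑' j, c j * pointCount (L j).edge z
  set B := fun z => ∑' j, c j * pointCount (L j).nextEdge z
  have hA : A ≤ a := fun z => by simpa [AltLoop.edges] using hle (.inl z)
  have hB : B ≤ b := fun z => by simpa [AltLoop.edges] using hle (.inr z)
  have hres : SameMarginals (a - A) (b - B) :=
    hab.tsub (.tsum_mul c fun j => (L j).sameMarginals_pointCount) hA hB ha
  obtain ⟨hAa, hBb⟩ := hres.eq_zero_of_forall_altLoop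
    (ne_top_of_le_ne_top hb (ENNReal.tsum_le_tsum fun z => tsub_le_self)) fun L' ε hlen hε => by
      obtain ⟨j, rfl⟩ := hL L'
      refine hmax j ε ⟨_, pointCount_apply_ne_zero _ (.inl ⟨0, Nat.pos_of_ne_zero hlen⟩)⟩
        fun s => ?_
      rcases s with z | z
      · simpa [A, AltLoop.edges] using hε (.inl z)
      · simpa [B, AltLoop.edges] using hε (.inr z)
  exact ⟨c, L, fun z => le_antisymm (tsub_eq_zero_iff_le.1 (congrFun hAa z)) (hA z),
    fun z => le_antisymm (tsub_eq_zero_iff_le.1 (congrFun hBb z)) (hB z)⟩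

end Decomposition

section Cost

theorem erealPos_coe (x : ℝ) : erealPos x = ENNReal.ofReal x := by
  simp [erealPos]

theorem _root_.EReal.coe_finsetSum (s : Finset κ) (u : κ → ℝ) :
    ((∑ k ∈ s, u k : ℝ) : EReal) = ∑ k ∈ s, (u k : EReal) :=
  map_sum (⟨⟨(↑), EReal.coe_zero⟩, EReal.coe_add⟩ : ℝ →+ EReal) u s

theorem sum_ofReal_add_sum_ofReal_neg_le [Fintype κ] {u v : κ → ℝ} (h : ∑ k, u k ≤ ∑ k, v k) :
    ∑ k, ENNReal.ofReal (u k) + ∑ k, ENNReal.ofReal (-v k) ≤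
      ∑ k, ENNReal.ofReal (v k) + ∑ k, ENNReal.ofReal (-u k) := by
  have hfin : ∀ w : κ → ℝ, ∑ k, ENNReal.ofReal (w k) ≠ ⊤ := fun w =>
    ENNReal.sum_ne_top.2 fun _ _ => ENNReal.ofReal_ne_top
  rw [← ENNReal.toReal_le_toReal (ENNReal.add_ne_top.2 ⟨hfin _, hfin _⟩)
    (ENNReal.add_ne_top.2 ⟨hfin _, hfin _⟩), ENNReal.toReal_add (hfin _) (hfin _),
    ENNReal.toReal_add (hfin _) (hfin _)]
  simp only [ENNReal.toReal_sum fun _ _ => ENNReal.ofReal_ne_top, ENNReal.toReal_ofReal']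
  have key : ∀ t : ℝ, max t 0 = t + max (-t) 0 := fun t => by
    rcases le_total 0 t with ht | ht <;> simp [ht]
  simp only [key (u _), key (v _), sum_add_distrib]
  linarith

theorem sum_erealPos_add_sum_erealPos_neg_le [Fintype κ] {u v : κ → EReal}
    (hu : ∀ k, u k ≠ ⊤ ∧ u k ≠ ⊥) (hv : ∀ k, v k ≠ ⊤ ∧ v k ≠ ⊥) (h : ∑ k, u k ≤ ∑ k, v k) :
    ∑ k, erealPos (u k) + ∑ k, erealPos (-v k) ≤
      ∑ k, erealPos (v k) + ∑ k, erealPos (-u k) := by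
  lift u to κ → ℝ using hu
  lift v to κ → ℝ using hv
  simp only [← EReal.coe_neg, erealPos_coe]
  rw [← EReal.coe_finsetSum, ← EReal.coe_finsetSum, EReal.coe_le_coe_iff] at h
  exact sum_ofReal_add_sum_ofReal_neg_le h

theorem ne_top_of_tsum_erealPos_mul_ne_top {c : ι → EReal} {a : ι → ℝ≥0∞}
    (h : ∑' s, erealPos (c s) * a s ≠ ⊤) {s : ι} (hs : a s ≠ 0) : c s ≠ ⊤ := fun hc =>
  h (ENNReal.tsum_eq_top_of_eq_top ⟨s, by simp [hc, erealPos, ENNReal.top_mul hs]⟩)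

theorem ne_bot_of_tsum_erealPos_neg_mul_ne_top {c : ι → EReal} {a : ι → ℝ≥0∞}
    (h : ∑' s, erealPos (-c s) * a s ≠ ⊤) {s : ι} (hs : a s ≠ 0) : c s ≠ ⊥ := by
  simpa using ne_top_of_tsum_erealPos_mul_ne_top (c := fun s => -c s) h hs

variable {ν : ℕ → Type*} [∀ j, Fintype (ν j)]

theorem tsum_mul_tsum_mul_pointCount (e : ∀ j, ν j → ι) (w : ℕ → ℝ≥0∞) (φ : ι → ℝ≥0∞) :
    ∑' s, φ s * ∑' j, w j * pointCount (e j) s = ∑' j, w j * ∑ k, φ (e j k) := by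
  simp_rw [← ENNReal.tsum_mul_left, ← tsum_mul_pointCount, ← ENNReal.tsum_mul_left]
  rw [ENNReal.tsum_comm]
  exact tsum_congr fun j => tsum_congr fun s => by ring

theorem ne_zero_of_eq_tsum_mul_pointCount {e : ∀ j, ν j → ι} {w : ℕ → ℝ≥0∞} {a : ι → ℝ≥0∞}
    (ha : ∀ s, a s = ∑' j, w j * pointCount (e j) s) {j : ℕ} (hj : w j ≠ 0) (k : ν j) :
    a (e j k) ≠ 0 := by
  rw [ha]
  exact fun h => hj ((mul_eq_zero.1 (ENNReal.tsum_eq_zero.1 h j)).resolve_right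
    (pointCount_apply_ne_zero _ k))

theorem tsum_erealPos_add_le {c : ι → EReal} {e e' : ∀ j, ν j → ι} {w : ℕ → ℝ≥0∞}
    {a b : ι → ℝ≥0∞} (ha : ∀ s, a s = ∑' j, w j * pointCount (e j) s)
    (hb : ∀ s, b s = ∑' j, w j * pointCount (e' j) s)
    (hPa : ∑' s, erealPos (c s) * a s ≠ ⊤) (hNa : ∑' s, erealPos (-c s) * a s ≠ ⊤)
    (hPb : ∑' s, erealPos (c s) * b s ≠ ⊤) (hNb : ∑' s, erealPos (-c s) * b s ≠ ⊤)
    (hc : ∀ j, w j ≠ 0 → ∑ k, c (e j k) ≤ ∑ k, c (e' j k)) :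
    ∑' s, erealPos (c s) * a s + ∑' s, erealPos (-c s) * b s ≤
      ∑' s, erealPos (c s) * b s + ∑' s, erealPos (-c s) * a s := by
  simp only [ha, hb, tsum_mul_tsum_mul_pointCount, ← ENNReal.tsum_add, ← mul_add]
  refine ENNReal.tsum_le_tsum fun j => ?_
  rcases eq_or_ne (w j) 0 with hj | hj
  · simp [hj]
  refine mul_le_mul_right ?_ _
  exact sum_erealPos_add_sum_erealPos_neg_le
    (fun k => ⟨ne_top_of_tsum_erealPos_mul_ne_top hPa (ne_zero_of_eq_tsum_mul_pointCount ha hj k),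
      ne_bot_of_tsum_erealPos_neg_mul_ne_top hNa (ne_zero_of_eq_tsum_mul_pointCount ha hj k)⟩)
    (fun k => ⟨ne_top_of_tsum_erealPos_mul_ne_top hPb (ne_zero_of_eq_tsum_mul_pointCount hb hj k),
      ne_bot_of_tsum_erealPos_neg_mul_ne_top hNb (ne_zero_of_eq_tsum_mul_pointCount hb hj k)⟩)
    (hc j hj)

theorem _root_.EReal.coe_ennreal_sub_le_coe_ennreal_sub {p q p' q' : ℝ≥0∞} (hp : p ≠ ⊤)
    (hq : q ≠ ⊤) (hp' : p' ≠ ⊤) (hq' : q' ≠ ⊤) (h : p + q' ≤ p' + q) :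
    (p : EReal) - q ≤ p' - q' := by
  lift p to NNReal using hp
  lift q to NNReal using hq
  lift p' to NNReal using hp'
  lift q' to NNReal using hq'
  simp only [EReal.coe_nnreal_eq_coe_real, ← EReal.coe_sub, EReal.coe_le_coe_iff]
  norm_cast at h
  have := NNReal.coe_le_coe.2 h
  push_cast at this
  linarith

theorem _root_.EReal.ne_top_of_coe_ennreal_sub {p q : ℝ≥0∞} (htop : (p : EReal) - q ≠ ⊤)
    (hbot : (p : EReal) - q ≠ ⊥) : p ≠ ⊤ ∧ q ≠ ⊤ := by
  refine ⟨fun hp => ?_, fun hq => hbot (by simp [hq])⟩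
  rcases eq_or_ne q ⊤ with hq | hq
  · exact hbot (by simp [hp, hq])
  · lift q to NNReal using hq
    exact htop (by simp [hp, EReal.coe_nnreal_eq_coe_real])

end Cost

theorem sameMarginals_of_map_eq [Countable α] [Countable β] [MeasurableSpace α]
    [MeasurableSingletonClass α] [MeasurableSpace β] [MeasurableSingletonClass β]
    {μ ν : Measure (α × β)}
    (h₁ : μ.map Prod.fst = ν.map Prod.fst) (h₂ : μ.map Prod.snd = ν.map Prod.snd) :
    SameMarginals (fun z => μ {z}) (fun z => ν {z}) := by
  refine ⟨fun x => ?_, fun y => ?_⟩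
  · simp only [← measure_preimage_fst_singleton_eq_tsum,
      ← Measure.map_apply measurable_fst (measurableSet_singleton x), h₁]
  · simp only [← measure_preimage_snd_singleton_eq_tsum,
      ← Measure.map_apply measurable_snd (measurableSet_singleton y), h₂]

end OptimalTransport

open OptimalTransport

theorem stmt15 (X₁ X₂ : Type*) [Countable X₁] [Countable X₂]
    [MeasurableSpace X₁] [MeasurableSingletonClass X₁]
    [MeasurableSpace X₂] [MeasurableSingletonClass X₂]
    (c : X₁ × X₂ → EReal)
    (γ : Measure (X₁ × X₂)) [IsProbabilityMeasure γ]
    (hfin : ecost c γ ≠ ⊤) (hfin' : ecost c γ ≠ ⊥)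
    -- the support (set of atoms) of γ is c-cyclically monotone:
    (hmono : ∀ (ℓ : ℕ) (σ₁ σ₂ : Equiv.Perm (Fin ℓ)) (x : Fin ℓ → X₁) (y : Fin ℓ → X₂),
      (∀ j, γ {(x j, y j)} ≠ 0) →
      ∑ j, c (x j, y j) ≤ ∑ j, c (x (σ₁ j), y (σ₂ j))) :
    ∀ γbar : Measure (X₁ × X₂), IsProbabilityMeasure γbar →
      (Measure.map Prod.fst γbar = Measure.map Prod.fst γ) →
      (Measure.map Prod.snd γbar = Measure.map Prod.snd γ) →
      ecost c γbar ≠ ⊤ → ecost c γbar ≠ ⊥ →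
      ecost c γ ≤ ecost c γbar := by
  intro γbar _ hfst hsnd hfin_bar hfin_bar'
  have hmass : ∑' z, γ {z} ≠ ⊤ := by
    have h := lintegral_countable' (μ := γ) 1
    simp only [lintegral_one, Pi.one_apply, one_mul] at h
    exact h ▸ measure_ne_top γ Set.univ
  obtain ⟨w, L, hγ, hγbar⟩ :=
    exists_altLoop_decomposition (sameMarginals_of_map_eq hfst.symm hsnd.symm) hmass
  simp only [ecost, lintegral_countable'] at hfin hfin' hfin_bar hfin_bar' ⊢
  obtain ⟨hP, hN⟩ := EReal.ne_top_of_coe_ennreal_sub hfin hfin'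
  obtain ⟨hP', hN'⟩ := EReal.ne_top_of_coe_ennreal_sub hfin_bar hfin_bar'
  refine EReal.coe_ennreal_sub_le_coe_ennreal_sub hP hN hP' hN'
    (tsum_erealPos_add_le hγ hγbar hP hN hP' hN' fun j hj => ?_)
  exact hmono _ (finRotate _) 1 (L j).xs (L j).ys (ne_zero_of_eq_tsum_mul_pointCount hγ hj)
end
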